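/- arXiv:1411.4561 — 3 statements merged into one kernel-verified Lean document; each statement's English description precedes it below -/
import Mathlib

section
/- In ℤ[[x,t]], the Dyck-path generating series satisfies the functional equation M(x) = 1 + t x² M(x) M(tx), where M(tx) denotes the image of M(x) under the continuous ring endomorphism of ℤ[[x,t]] fixing t and sending x to tx. -/
open CoxeterSystem

/-- A valid step of a Dyck-type walk between consecutive heights `a`, `b`:
an up step `(1,1)`, a down step `(1,-1)`, or a horizontal step `(1,0)`, the latter
being allowed only between points on the `x`-axis. -/
def IsWalkStep (a b : ℕ) : Prop := b = a + 1 ∨ a = b + 1 ∨ (a = 0 ∧ b = 0)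

/-- A step which is an up step `(1,1)` or a down step `(1,-1)` (no horizontal step). -/
def IsPMStep (a b : ℕ) : Prop := b = a + 1 ∨ a = b + 1

/-- A walk of length `n`, recorded by its sequence of heights `h 0, h 1, …, h n`
(the `i`-th point of the walk is `(i, h i)`). -/
def IsWalk (n : ℕ) (h : Fin (n + 1) → ℕ) : Prop :=
  ∀ i : Fin n, IsWalkStep (h i.castSucc) (h i.succ)

/-- A walk of length `n` with no horizontal step. -/
def IsPMWalk (n : ℕ) (h : Fin (n + 1) → ℕ) : Prop :=
  ∀ i : Fin n, IsPMStep (h i.castSucc) (h i.succ)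

/-- Walks in `M*_n`: walks of length `n` from `(0,0)` to `(n,0)` (horizontal steps
allowed at height `0`). -/
def IsMStarWalk (n : ℕ) (h : Fin (n + 1) → ℕ) : Prop :=
  IsWalk n h ∧ h 0 = 0 ∧ h (Fin.last n) = 0

/-- Walks in `M_n` (Dyck paths): walks of length `n` from `(0,0)` to `(n,0)` with no
horizontal step. -/
def IsMWalk (n : ℕ) (h : Fin (n + 1) → ℕ) : Prop :=
  IsPMWalk n h ∧ h 0 = 0 ∧ h (Fin.last n) = 0

/-- Walks in `Q_n` (prefixes of Dyck paths): walks of length `n` starting at `(0,0)`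
with no horizontal step, ending at arbitrary height. -/
def IsQWalk (n : ℕ) (h : Fin (n + 1) → ℕ) : Prop :=
  IsPMWalk n h ∧ h 0 = 0

/-- Walks in `Q^o_n`: prefixes of Dyck paths of length `n` ending at odd height. -/
def IsQoWalk (n : ℕ) (h : Fin (n + 1) → ℕ) : Prop :=
  IsQWalk n h ∧ Odd (h (Fin.last n))

/-- The total height of a walk: the sum of the heights of its points. -/
def totalHeight (n : ℕ) (h : Fin (n + 1) → ℕ) : ℕ := ∑ i, h i

/-- We represent the formal power series ring `ℤ[[x,t]]` as `(ℤ[[t]])[[x]]`,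
i.e. `PowerSeries (PowerSeries ℤ)`: the outer variable is `x`, the inner one is `t`.
Given a family of walk predicates, `walkSeries P` is the generating series
`Σ_{n ≥ 0} x^n Σ_{walks of length n} t^(total height)`: its coefficient of `x^n t^k`
is the number of walks of length `n` in the family with total height `k`. -/
noncomputable def walkSeries (P : (n : ℕ) → (Fin (n + 1) → ℕ) → Prop) :
    PowerSeries (PowerSeries ℤ) :=
  PowerSeries.mk fun n => PowerSeries.mk fun k =>
    (Nat.card {h : Fin (n + 1) → ℕ // P n h ∧ totalHeight n h = k} : ℤ)

/-- The series `M(x)`, counting Dyck paths by length (in `x`) and total height (in `t`). -/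
noncomputable def Mser : PowerSeries (PowerSeries ℤ) := walkSeries IsMWalk

/-- The series `M*(x)`, counting walks from `(0,0)` to `(n,0)` with horizontal steps
allowed at height `0`. -/
noncomputable def MstarSer : PowerSeries (PowerSeries ℤ) := walkSeries IsMStarWalk

/-- The series `Q(x)`, counting prefixes of Dyck paths. -/
noncomputable def Qser : PowerSeries (PowerSeries ℤ) := walkSeries IsQWalk

/-- The series `Q^o(x)`, counting prefixes of Dyck paths ending at odd height. -/
noncomputable def QoSer : PowerSeries (PowerSeries ℤ) := walkSeries IsQoWalk

/-- The variable `x` of `ℤ[[x,t]] = (ℤ[[t]])[[x]]`. -/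
noncomputable def xVar : PowerSeries (PowerSeries ℤ) := PowerSeries.X

/-- The variable `t` of `ℤ[[x,t]] = (ℤ[[t]])[[x]]` (a constant series in `x`). -/
noncomputable def tVar : PowerSeries (PowerSeries ℤ) :=
  PowerSeries.C PowerSeries.X

/-- The continuous ring endomorphism of `ℤ[[x,t]]` fixing `t` and sending `x` to `t^j · x`
(`j = 1` gives `F(x) ↦ F(tx)`, `j = 2` gives `F(x) ↦ F(t²x)`). -/
noncomputable def substTx (j : ℕ) :
    PowerSeries (PowerSeries ℤ) →+* PowerSeries (PowerSeries ℤ) :=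
  PowerSeries.rescale ((PowerSeries.X : PowerSeries ℤ) ^ j)

namespace MAux

open Finset PowerSeries

/-- Walks encoded as functions `ℕ → ℕ` vanishing from position `n` on. -/
def MProp (n k : ℕ) (g : ℕ → ℕ) : Prop :=
  g 0 = 0 ∧ (∀ j < n, IsPMStep (g j) (g (j + 1))) ∧ (∀ j, n ≤ j → g j = 0) ∧
    (∑ j ∈ Finset.range (n + 1), g j) = k

lemma MProp.le {n k : ℕ} {g : ℕ → ℕ} (h : MProp n k g) (j : ℕ) : g j ≤ k := by
  rcases le_or_gt j n with hj | hj
  · calc g j ≤ ∑ i ∈ Finset.range (n + 1), g i :=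
        Finset.single_le_sum (fun i _ => Nat.zero_le _) (Finset.mem_range.2 (by omega))
      _ = k := h.2.2.2
  · rw [h.2.2.1 j (by omega)]
    exact Nat.zero_le _

instance MProp.finite (n k : ℕ) : Finite {g : ℕ → ℕ // MProp n k g} := by
  apply Finite.of_injective
    (fun g (i : Fin (n + 1)) => (⟨g.1 i, Nat.lt_succ_of_le (g.2.le i)⟩ : Fin (k + 1)))
  intro g g' hgg
  apply Subtype.ext
  funext j
  rcases lt_or_ge j (n + 1) with hj | hj
  · simpa using congrArg Fin.val (congrFun hgg ⟨j, hj⟩)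
  · rw [g.2.2.2.1 j (by omega), g'.2.2.2.1 j (by omega)]

noncomputable def N (n k : ℕ) : ℕ := Nat.card {g : ℕ → ℕ // MProp n k g}

noncomputable def A (n : ℕ) : PowerSeries ℤ := PowerSeries.mk fun k => (N n k : ℤ)

/-- Fin-indexed Dyck walks of fixed total height correspond to ℕ-indexed ones. -/
def finEquiv (n k : ℕ) :
    {h : Fin (n + 1) → ℕ // IsMWalk n h ∧ totalHeight n h = k} ≃
      {g : ℕ → ℕ // MProp n k g} where
  toFun h := ⟨fun j => if hj : j < n + 1 then h.1 ⟨j, hj⟩ else 0, by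
    refine ⟨?_, ?_, ?_, ?_⟩
    · beta_reduce
      rw [dif_pos (by omega)]
      simpa using h.2.1.2.1
    · intro j hj
      beta_reduce
      rw [dif_pos (by omega), dif_pos (by omega)]
      simpa [Fin.castSucc, Fin.castAdd, Fin.castLE, Fin.succ] using h.2.1.1 ⟨j, hj⟩
    · intro j hj
      beta_reduce
      rcases eq_or_lt_of_le hj with rfl | hj'
      · rw [dif_pos (by omega)]
        simpa [Fin.last] using h.2.1.2.2
      · rw [dif_neg (by omega)]
    · beta_reduce
      rw [← Fin.sum_univ_eq_sum_range (fun j => if hj : j < n + 1 then h.1 ⟨j, hj⟩ else 0)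
        (n + 1)]
      calc (∑ i : Fin (n + 1), if hj : (i : ℕ) < n + 1 then h.1 ⟨i, hj⟩ else 0)
          = ∑ i, h.1 i := Finset.sum_congr rfl fun i _ => by simp; have := i.isLt; omega
        _ = k := h.2.2⟩
  invFun g := ⟨fun i => g.1 i, by
    obtain ⟨g, h0, hstep, hvan, hsum⟩ := g
    refine ⟨⟨fun i => ?_, ?_, ?_⟩, ?_⟩
    · simpa using hstep i i.isLt
    · simpa using h0
    · simpa using hvan n le_rfl
    · unfold totalHeight
      rw [Fin.sum_univ_eq_sum_range (fun j => g j) (n + 1)]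
      exact hsum⟩
  left_inv h := by
    apply Subtype.ext
    funext i
    simp
    have := i.isLt
    omega
  right_inv g := by
    apply Subtype.ext
    funext j
    by_cases hj : j < n + 1
    · simp [hj]
    · simp only [dif_neg hj]
      exact (g.2.2.2.1 j (by omega)).symm

lemma MProp.ex {n k : ℕ} {g : ℕ → ℕ} (hg : MProp (n + 2) k g) : ∃ j, g (j + 2) = 0 :=
  ⟨n, hg.2.2.1 (n + 2) le_rfl⟩

noncomputable def fret (g : ℕ → ℕ) (h : ∃ j, g (j + 2) = 0) : ℕ := Nat.find h

lemma g_one {n k : ℕ} {g : ℕ → ℕ} (hg : MProp (n + 2) k g) : g 1 = 1 := by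
  have hs := hg.2.1 0 (by omega)
  rw [hg.1] at hs
  simp only [Nat.zero_add] at hs
  rcases hs with hs | hs <;> omega

lemma fret_le {n k : ℕ} {g : ℕ → ℕ} (hg : MProp (n + 2) k g) : fret g hg.ex ≤ n :=
  Nat.find_min' hg.ex (hg.2.2.1 (n + 2) le_rfl)

lemma fret_spec {n k : ℕ} {g : ℕ → ℕ} (hg : MProp (n + 2) k g) :
    g (fret g hg.ex + 2) = 0 := Nat.find_spec hg.ex

lemma fret_pos {n k : ℕ} {g : ℕ → ℕ} (hg : MProp (n + 2) k g) :
    ∀ j, 1 ≤ j → j ≤ fret g hg.ex + 1 → g j ≠ 0 := by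
  intro j h1 h2
  rcases Nat.lt_or_ge j 2 with hj | hj
  · have hj1 : j = 1 := by omega
    subst hj1
    rw [g_one hg]
    omega
  · have hlt : j - 2 < fret g hg.ex := by omega
    have hmin := Nat.find_min hg.ex (m := j - 2) hlt
    have e : j - 2 + 2 = j := by omega
    rwa [e] at hmin

/-- First factor of the first-return decomposition (the lifted inner path). -/
def part1 (m : ℕ) (g : ℕ → ℕ) : ℕ → ℕ := fun i => if i ≤ m then g (i + 1) - 1 else 0

/-- Second factor of the first-return decomposition. -/
def part2 (m : ℕ) (g : ℕ → ℕ) : ℕ → ℕ := fun i => g (m + 2 + i)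

/-- Composition of two walks into a walk with first return at `m + 2`. -/
def compF (m : ℕ) (g₁ g₂ : ℕ → ℕ) : ℕ → ℕ := fun j =>
  if j = 0 then 0 else if j ≤ m + 1 then g₁ (j - 1) + 1 else g₂ (j - (m + 2))

lemma compF_zero (m : ℕ) (g₁ g₂ : ℕ → ℕ) : compF m g₁ g₂ 0 = 0 := rfl

lemma compF_mid {m j : ℕ} (g₁ g₂ : ℕ → ℕ) (hj1 : 1 ≤ j) (hj2 : j ≤ m + 1) :
    compF m g₁ g₂ j = g₁ (j - 1) + 1 := by
  unfold compF
  rw [if_neg (by omega), if_pos hj2]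

lemma compF_high {m j : ℕ} (g₁ g₂ : ℕ → ℕ) (hj : m + 2 ≤ j) :
    compF m g₁ g₂ j = g₂ (j - (m + 2)) := by
  unfold compF
  rw [if_neg (by omega), if_neg (by omega)]

lemma sum_compF (m r : ℕ) (g₁ g₂ : ℕ → ℕ) :
    ∑ j ∈ Finset.range (m + r + 2 + 1), compF m g₁ g₂ j =
      m + 1 + (∑ j ∈ Finset.range (m + 1), g₁ j) + (∑ j ∈ Finset.range (r + 1), g₂ j) := by
  have e : m + r + 2 + 1 = (m + 2) + (r + 1) := by omega
  rw [e, Finset.sum_range_add]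
  have h2 : ∀ j ∈ Finset.range (r + 1), compF m g₁ g₂ (m + 2 + j) = g₂ j := by
    intro j hj
    rw [compF_high g₁ g₂ (by omega)]
    congr 1
    omega
  rw [Finset.sum_congr rfl h2]
  have h1 : ∑ j ∈ Finset.range (m + 2), compF m g₁ g₂ j
      = m + 1 + ∑ j ∈ Finset.range (m + 1), g₁ j := by
    rw [Finset.sum_range_succ']
    have h1' : ∀ j ∈ Finset.range (m + 1), compF m g₁ g₂ (j + 1) = g₁ j + 1 := by
      intro j hj
      rw [compF_mid g₁ g₂ (by omega) (by simp only [Finset.mem_range] at hj; omega)]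
      simp
    rw [Finset.sum_congr rfl h1', compF_zero, Finset.sum_add_distrib, Finset.sum_const,
      Finset.card_range, smul_eq_mul, mul_one]
    omega
  rw [h1]

lemma MProp_compF {m k1 r k2 : ℕ} {g₁ g₂ : ℕ → ℕ} (h1 : MProp m k1 g₁) (h2 : MProp r k2 g₂) :
    MProp (m + r + 2) (m + 1 + k1 + k2) (compF m g₁ g₂) := by
  obtain ⟨h10, h1s, h1v, h1k⟩ := h1
  obtain ⟨h20, h2s, h2v, h2k⟩ := h2
  refine ⟨rfl, ?_, ?_, ?_⟩
  · intro j hj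
    rcases Nat.eq_zero_or_pos j with rfl | hj0
    · rw [compF_zero, compF_mid g₁ g₂ le_rfl (by omega)]
      simp only [Nat.sub_self, h10]
      exact Or.inl rfl
    rcases lt_or_ge j (m + 1) with hjm | hjm
    · rw [compF_mid g₁ g₂ (by omega) (by omega), compF_mid g₁ g₂ (by omega) (by omega)]
      have hs := h1s (j - 1) (by omega)
      have e1 : j - 1 + 1 = j := by omega
      have e2 : j + 1 - 1 = j := by omega
      rw [e1] at hs
      rw [e2]
      rcases hs with hs | hs
      · exact Or.inl (by omega)
      · exact Or.inr (by omega)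
    rcases eq_or_lt_of_le hjm with rfl | hjm'
    · -- j = m + 1 : down step to 0
      rw [compF_mid g₁ g₂ (by omega) le_rfl, compF_high g₁ g₂ (by omega)]
      have e1 : m + 1 - 1 = m := by omega
      have e2 : m + 1 + 1 - (m + 2) = 0 := by omega
      rw [e1, e2, h1v m le_rfl, h20]
      exact Or.inr rfl
    · rw [compF_high g₁ g₂ (by omega), compF_high g₁ g₂ (by omega)]
      have hs := h2s (j - (m + 2)) (by omega)
      have e : j + 1 - (m + 2) = j - (m + 2) + 1 := by omega
      rw [e]
      exact hs
  · intro j hj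
    rw [compF_high g₁ g₂ (by omega)]
    exact h2v (j - (m + 2)) (by omega)
  · rw [sum_compF, h1k, h2k]

lemma MProp_part1 {n k : ℕ} {g : ℕ → ℕ} (hg : MProp (n + 2) k g) {m : ℕ} (hm : m ≤ n)
    (hm0 : g (m + 2) = 0) (hpos : ∀ j, 1 ≤ j → j ≤ m + 1 → g j ≠ 0) :
    MProp m (∑ j ∈ Finset.range (m + 1), part1 m g j) (part1 m g) := by
  have gtop : g (m + 1) = 1 := by
    have hs := hg.2.1 (m + 1) (by omega)
    have hp := hpos (m + 1) (by omega) le_rfl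
    rw [hm0] at hs
    rcases hs with hs | hs <;> omega
  refine ⟨?_, ?_, ?_, rfl⟩
  · show (if 0 ≤ m then g 1 - 1 else 0) = 0
    rw [if_pos (Nat.zero_le m), g_one hg]
  · intro j hj
    unfold part1
    rw [if_pos (by omega), if_pos (by omega)]
    have hs := hg.2.1 (j + 1) (by omega)
    have h1 := hpos (j + 1) (by omega) (by omega)
    have h2 := hpos (j + 1 + 1) (by omega) (by omega)
    rcases hs with hs | hs
    · exact Or.inl (by omega)
    · exact Or.inr (by omega)
  · intro j hj
    unfold part1
    rcases eq_or_lt_of_le hj with rfl | h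
    · rw [if_pos le_rfl, gtop]
    · rw [if_neg (by omega)]

lemma MProp_part2 {n k : ℕ} {g : ℕ → ℕ} (hg : MProp (n + 2) k g) {m : ℕ} (hm : m ≤ n)
    (hm0 : g (m + 2) = 0) :
    MProp (n - m) (∑ j ∈ Finset.range (n - m + 1), part2 m g j) (part2 m g) := by
  refine ⟨?_, ?_, ?_, rfl⟩
  · show g (m + 2 + 0) = 0
    simpa using hm0
  · intro j hj
    exact hg.2.1 (m + 2 + j) (by omega)
  · intro j hj
    exact hg.2.2.1 (m + 2 + j) (by omega)

lemma comp_part {n k : ℕ} {g : ℕ → ℕ} (hg : MProp (n + 2) k g) {m : ℕ}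
    (hm0 : g (m + 2) = 0) (hpos : ∀ j, 1 ≤ j → j ≤ m + 1 → g j ≠ 0) :
    compF m (part1 m g) (part2 m g) = g := by
  funext j
  rcases Nat.eq_zero_or_pos j with rfl | hj0
  · rw [compF_zero]
    exact hg.1.symm
  rcases le_or_gt j (m + 1) with hjm | hjm
  · rw [compF_mid _ _ hj0 hjm]
    unfold part1
    rw [if_pos (by omega)]
    have e : j - 1 + 1 = j := by omega
    rw [e]
    have := hpos j hj0 hjm
    omega
  · rw [compF_high _ _ (by omega)]
    unfold part2
    congr 1
    omega

lemma sum_part {n k : ℕ} {g : ℕ → ℕ} (hg : MProp (n + 2) k g) {m : ℕ} (hm : m ≤ n)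
    (hm0 : g (m + 2) = 0) (hpos : ∀ j, 1 ≤ j → j ≤ m + 1 → g j ≠ 0) :
    m + 1 + (∑ j ∈ Finset.range (m + 1), part1 m g j)
      + (∑ j ∈ Finset.range (n - m + 1), part2 m g j) = k := by
  have h := sum_compF m (n - m) (part1 m g) (part2 m g)
  rw [comp_part hg hm0 hpos] at h
  have e : m + (n - m) + 2 + 1 = n + 2 + 1 := by omega
  rw [e] at h
  have h2 := hg.2.2.2
  omega

lemma fret_eq {m : ℕ} {g₁ g₂ : ℕ → ℕ} (h1v : ∀ j, m ≤ j → g₁ j = 0) (h20 : g₂ 0 = 0)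
    (h : ∃ j, compF m g₁ g₂ (j + 2) = 0) : fret (compF m g₁ g₂) h = m := by
  rw [fret, Nat.find_eq_iff]
  constructor
  · rw [compF_high g₁ g₂ (by omega)]
    simpa using h20
  · intro j hj
    rw [compF_mid g₁ g₂ (by omega) (by omega)]
    simp

/-- The data of a first-return decomposition:
`(((m, r), (k1, k2)), (g₁, g₂))` with `m + r = n`, `m + 1 + k1 + k2 = k`,
`g₁` a walk of length `m` and total height `k1`, `g₂` of length `r` and height `k2`. -/
def Cond (n k : ℕ) (w : ((ℕ × ℕ) × ℕ × ℕ) × (ℕ → ℕ) × (ℕ → ℕ)) : Prop :=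
  w.1.1.1 + w.1.1.2 = n ∧ w.1.1.1 + 1 + w.1.2.1 + w.1.2.2 = k ∧
    MProp w.1.1.1 w.1.2.1 w.2.1 ∧ MProp w.1.1.2 w.1.2.2 w.2.2

lemma Cond.bound {n k : ℕ} {w : ((ℕ × ℕ) × ℕ × ℕ) × (ℕ → ℕ) × (ℕ → ℕ)} (hw : Cond n k w) :
    w.1.1.1 ≤ n ∧ w.1.1.2 ≤ n ∧ w.1.2.1 ≤ k ∧ w.1.2.2 ≤ k ∧
      (∀ x, w.2.1 x ≤ k) ∧ (∀ x, w.2.2 x ≤ k) := by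
  obtain ⟨hmr, hsum, h1, h2⟩ := hw
  exact ⟨by omega, by omega, by omega, by omega,
    fun x => le_trans (h1.le x) (by omega), fun x => le_trans (h2.le x) (by omega)⟩

instance condFinite (n k : ℕ) :
    Finite {w : ((ℕ × ℕ) × ℕ × ℕ) × (ℕ → ℕ) × (ℕ → ℕ) // Cond n k w} := by
  apply Finite.of_injective
    (β := ((Fin (n + 1) × Fin (n + 1)) × Fin (k + 1) × Fin (k + 1)) ×
      (Fin (n + 1) → Fin (k + 1)) × (Fin (n + 1) → Fin (k + 1)))
    (fun W => (((⟨W.1.1.1.1, Nat.lt_succ_of_le W.2.bound.1⟩,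
        ⟨W.1.1.1.2, Nat.lt_succ_of_le W.2.bound.2.1⟩),
      (⟨W.1.1.2.1, Nat.lt_succ_of_le W.2.bound.2.2.1⟩,
        ⟨W.1.1.2.2, Nat.lt_succ_of_le W.2.bound.2.2.2.1⟩)),
      (fun i => ⟨W.1.2.1 i, Nat.lt_succ_of_le (W.2.bound.2.2.2.2.1 i)⟩,
       fun i => ⟨W.1.2.2 i, Nat.lt_succ_of_le (W.2.bound.2.2.2.2.2 i)⟩)))
  intro W W' hEq
  obtain ⟨b1, b2, -, -, -, -⟩ := W.2.bound
  obtain ⟨c1, c2, -, -, -, -⟩ := W'.2.bound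
  have hv1 := W.2.2.2.1.2.2.1
  have hv2 := W.2.2.2.2.2.2.1
  have hv1' := W'.2.2.2.1.2.2.1
  have hv2' := W'.2.2.2.2.2.2.1
  simp only [Prod.mk.injEq, Fin.mk.injEq] at hEq
  obtain ⟨⟨⟨e1, e2⟩, e3, e4⟩, e5, e6⟩ := hEq
  apply Subtype.ext
  have hg1 : W.1.2.1 = W'.1.2.1 := by
    funext j
    rcases lt_or_ge j (n + 1) with hj | hj
    · simpa using congrArg Fin.val (congrFun e5 ⟨j, hj⟩)
    · rw [hv1 j (by omega), hv1' j (by omega)]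
  have hg2 : W.1.2.2 = W'.1.2.2 := by
    funext j
    rcases lt_or_ge j (n + 1) with hj | hj
    · simpa using congrArg Fin.val (congrFun e6 ⟨j, hj⟩)
    · rw [hv2 j (by omega), hv2' j (by omega)]
  have : W.1.1 = W'.1.1 := Prod.ext (Prod.ext e1 e2) (Prod.ext e3 e4)
  calc W.1 = (W.1.1, (W.1.2.1, W.1.2.2)) := rfl
    _ = (W'.1.1, (W'.1.2.1, W'.1.2.2)) := by rw [this, hg1, hg2]
    _ = W'.1 := rfl

/-- The first-return decomposition, as an equivalence. -/
noncomputable def decompEquiv (n k : ℕ) :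
    {g : ℕ → ℕ // MProp (n + 2) k g} ≃
      {w : ((ℕ × ℕ) × ℕ × ℕ) × (ℕ → ℕ) × (ℕ → ℕ) // Cond n k w} where
  toFun gp :=
    ⟨(((fret gp.1 gp.2.ex, n - fret gp.1 gp.2.ex),
        (∑ j ∈ Finset.range (fret gp.1 gp.2.ex + 1), part1 (fret gp.1 gp.2.ex) gp.1 j,
         ∑ j ∈ Finset.range (n - fret gp.1 gp.2.ex + 1), part2 (fret gp.1 gp.2.ex) gp.1 j)),
      (part1 (fret gp.1 gp.2.ex) gp.1, part2 (fret gp.1 gp.2.ex) gp.1)), by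
      obtain ⟨g, hg⟩ := gp
      dsimp only
      have hle : fret g hg.ex ≤ n := fret_le hg
      refine ⟨?_, ?_, ?_, ?_⟩ <;> dsimp only
      · omega
      · exact sum_part hg hle (fret_spec hg) (fret_pos hg)
      · exact MProp_part1 hg hle (fret_spec hg) (fret_pos hg)
      · exact MProp_part2 hg hle (fret_spec hg)⟩
  invFun wp :=
    ⟨compF wp.1.1.1.1 wp.1.2.1 wp.1.2.2, by
      obtain ⟨⟨⟨⟨m, r⟩, k1, k2⟩, g₁, g₂⟩, hmr, hsum, h1, h2⟩ := wp
      dsimp only at hmr hsum h1 h2 ⊢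
      have hc := MProp_compF h1 h2
      have e1 : m + r + 2 = n + 2 := by omega
      rw [e1, hsum] at hc
      exact hc⟩
  left_inv gp := by
    obtain ⟨g, hg⟩ := gp
    exact Subtype.ext (comp_part hg (fret_spec hg) (fret_pos hg))
  right_inv wp := by
    obtain ⟨⟨⟨⟨m, r⟩, k1, k2⟩, g₁, g₂⟩, hmr, hsum, h1, h2⟩ := wp
    dsimp only at hmr hsum h1 h2
    apply Subtype.ext
    dsimp only
    have hfr : ∀ hex : ∃ j, compF m g₁ g₂ (j + 2) = 0, fret (compF m g₁ g₂) hex = m :=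
      fun hex => fret_eq h1.2.2.1 h2.1 hex
    have hp1 : part1 m (compF m g₁ g₂) = g₁ := by
      funext i
      unfold part1
      rcases le_or_gt i m with hi | hi
      · rw [if_pos hi, compF_mid g₁ g₂ (by omega) (by omega)]
        simp
      · rw [if_neg (by omega), h1.2.2.1 i (by omega)]
    have hp2 : part2 m (compF m g₁ g₂) = g₂ := by
      funext i
      unfold part2
      rw [compF_high g₁ g₂ (by omega)]
      congr 1
      omega
    simp only [hfr, hp1, hp2]
    have hr : n - m = r := by omega
    rw [hr, h1.2.2.2, h2.2.2.2]

lemma card_fiber_sum {α ι : Type*} [Finite α] [DecidableEq ι] (s : Finset ι) (f : α → ι)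
    (hf : ∀ a, f a ∈ s) : Nat.card α = ∑ i ∈ s, Nat.card {a : α // f a = i} := by
  classical
  cases nonempty_fintype α
  rw [Nat.card_eq_fintype_card, ← Finset.card_univ,
    Finset.card_eq_sum_card_fiberwise (fun a _ => hf a)]
  refine Finset.sum_congr rfl fun i _ => ?_
  rw [Nat.card_eq_fintype_card, Fintype.card_subtype]

/-- The fiber of the decomposition over fixed lengths and heights is a product of walk sets. -/
def fiberEquiv (n k : ℕ) (p q : ℕ × ℕ) (hp : p.1 + p.2 = n) (hk : p.2 + 1 + q.2 + q.1 = k) :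
    {W : {w : ((ℕ × ℕ) × ℕ × ℕ) × (ℕ → ℕ) × (ℕ → ℕ) // Cond n k w} //
        ((W.1.1.1.2, W.1.1.1.1), (W.1.1.2.2, W.1.1.2.1)) = (p, q)} ≃
      {g : ℕ → ℕ // MProp p.1 q.1 g} × {g : ℕ → ℕ // MProp p.2 q.2 g} where
  toFun b :=
    (⟨b.1.1.2.2, by
      obtain ⟨⟨⟨⟨⟨m, r⟩, k1, k2⟩, g₁, g₂⟩, hc⟩, hf⟩ := b
      obtain rfl : (r, m) = p := congrArg Prod.fst hf
      obtain rfl : (k2, k1) = q := congrArg Prod.snd hf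
      exact hc.2.2.2⟩,
     ⟨b.1.1.2.1, by
      obtain ⟨⟨⟨⟨⟨m, r⟩, k1, k2⟩, g₁, g₂⟩, hc⟩, hf⟩ := b
      obtain rfl : (r, m) = p := congrArg Prod.fst hf
      obtain rfl : (k2, k1) = q := congrArg Prod.snd hf
      exact hc.2.2.1⟩)
  invFun gh :=
    ⟨⟨(((p.2, p.1), (q.2, q.1)), (gh.2.1, gh.1.1)),
      ⟨by dsimp only; omega, by dsimp only; omega, gh.2.2, gh.1.2⟩⟩, by simp⟩
  left_inv b := by
    obtain ⟨⟨⟨⟨⟨m, r⟩, k1, k2⟩, g₁, g₂⟩, hc⟩, hf⟩ := b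
    obtain rfl : (r, m) = p := congrArg Prod.fst hf
    obtain rfl : (k2, k1) = q := congrArg Prod.snd hf
    rfl
  right_inv gh := rfl

lemma fiber_card (n k : ℕ) (p q : ℕ × ℕ) (hp : p.1 + p.2 = n) :
    Nat.card {W : {w : ((ℕ × ℕ) × ℕ × ℕ) × (ℕ → ℕ) × (ℕ → ℕ) // Cond n k w} //
        ((W.1.1.1.2, W.1.1.1.1), (W.1.1.2.2, W.1.1.2.1)) = (p, q)} =
      if p.2 + 1 + q.2 + q.1 = k then N p.1 q.1 * N p.2 q.2 else 0 := by
  split_ifs with hk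
  · exact (Nat.card_congr (fiberEquiv n k p q hp hk)).trans (Nat.card_prod _ _)
  · haveI : IsEmpty {W : {w : ((ℕ × ℕ) × ℕ × ℕ) × (ℕ → ℕ) × (ℕ → ℕ) // Cond n k w} //
        ((W.1.1.1.2, W.1.1.1.1), (W.1.1.2.2, W.1.1.2.1)) = (p, q)} := by
      refine ⟨fun W => ?_⟩
      obtain ⟨⟨⟨⟨⟨m, r⟩, k1, k2⟩, g₁, g₂⟩, hc⟩, hf⟩ := W
      obtain rfl : (r, m) = p := congrArg Prod.fst hf
      obtain rfl : (k2, k1) = q := congrArg Prod.snd hf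
      refine hk ?_
      have hc2 := hc.2.1
      dsimp only at hc2 ⊢
      omega
    exact Nat.card_of_isEmpty

lemma N_rec (n k : ℕ) :
    N (n + 2) k = ∑ p ∈ antidiagonal n,
      if p.2 + 1 ≤ k then ∑ q ∈ antidiagonal (k - (p.2 + 1)), N p.1 q.1 * N p.2 q.2 else 0 := by
  classical
  have h0 : N (n + 2) k = Nat.card {w : ((ℕ × ℕ) × ℕ × ℕ) × (ℕ → ℕ) × (ℕ → ℕ) // Cond n k w} :=
    Nat.card_congr (decompEquiv n k)
  rw [h0, card_fiber_sum ((antidiagonal n) ×ˢ ((range (k + 1)) ×ˢ (range (k + 1))))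
    (fun W => ((W.1.1.1.2, W.1.1.1.1), (W.1.1.2.2, W.1.1.2.1)))
    (by
      rintro ⟨⟨⟨⟨m, r⟩, k1, k2⟩, g₁, g₂⟩, hmr, hsum, h1, h2⟩
      dsimp only at hmr hsum ⊢
      simp only [Finset.mem_product, Finset.HasAntidiagonal.mem_antidiagonal, Finset.mem_range]
      omega),
    Finset.sum_product]
  refine Finset.sum_congr rfl fun p hp => ?_
  rw [Finset.HasAntidiagonal.mem_antidiagonal] at hp
  rw [Finset.sum_congr rfl fun q _ => fiber_card n k p q hp]
  by_cases hpk : p.2 + 1 ≤ k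
  · rw [if_pos hpk, ← Finset.sum_filter]
    apply Finset.sum_congr ?_ fun q _ => rfl
    ext q
    simp only [Finset.mem_filter, Finset.mem_product, Finset.mem_range, Finset.HasAntidiagonal.mem_antidiagonal]
    omega
  · rw [if_neg hpk]
    exact Finset.sum_eq_zero fun q _ => if_neg (by omega)

lemma A_rec (d : ℕ) :
    A (d + 2) = ∑ p ∈ antidiagonal d, X ^ (p.2 + 1) * (A p.1 * A p.2) := by
  ext k
  rw [map_sum]
  have hL : (PowerSeries.coeff k) (A (d + 2)) = ((N (d + 2) k : ℕ) : ℤ) := by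
    simp [A]
  rw [hL, N_rec d k, Nat.cast_sum]
  refine Finset.sum_congr rfl fun p _ => ?_
  rw [coeff_X_pow_mul']
  split_ifs with h
  · rw [coeff_mul, Nat.cast_sum]
    refine Finset.sum_congr rfl fun q _ => ?_
    simp [A]
  · simp

lemma A_zero : A 0 = 1 := by
  ext k
  rw [coeff_one]
  have hL : (PowerSeries.coeff k) (A 0) = ((N 0 k : ℕ) : ℤ) := by simp [A]
  rw [hL]
  by_cases hk : k = 0
  · subst hk
    rw [if_pos rfl]
    have hU : Unique {g : ℕ → ℕ // MProp 0 0 g} := {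
      default := ⟨fun _ => 0, ⟨rfl, fun j hj => absurd hj (by omega), fun j _ => rfl, by simp⟩⟩
      uniq := fun g => Subtype.ext (funext fun j => g.2.2.2.1 j (Nat.zero_le j)) }
    have : N 0 0 = 1 := Nat.card_unique
    rw [this]
    norm_num
  · rw [if_neg hk]
    haveI : IsEmpty {g : ℕ → ℕ // MProp 0 k g} := by
      refine ⟨fun g => hk ?_⟩
      have hs := g.2.2.2.2
      have h0 := g.2.1
      rw [Finset.sum_range_one, h0] at hs
      omega
    have : N 0 k = 0 := Nat.card_of_isEmpty
    rw [this]
    norm_num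

lemma A_one : A 1 = 0 := by
  ext k
  have hL : (PowerSeries.coeff k) (A 1) = ((N 1 k : ℕ) : ℤ) := by simp [A]
  rw [hL, map_zero]
  haveI : IsEmpty {g : ℕ → ℕ // MProp 1 k g} := by
    refine ⟨fun g => ?_⟩
    have hs := g.2.2.1 0 (by omega)
    have h0 := g.2.1
    have h1 := g.2.2.2.1 1 le_rfl
    rw [h0, h1] at hs
    rcases hs with hs | hs <;> omega
  have : N 1 k = 0 := Nat.card_of_isEmpty
  rw [this]
  norm_num

lemma coeff_Mser (n : ℕ) : (PowerSeries.coeff n) Mser = A n := by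
  ext k
  simp only [Mser, walkSeries, PowerSeries.coeff_mk, A]
  norm_cast
  exact Nat.card_congr (finEquiv n k)

end MAux

/-- The Dyck-path generating series satisfies `M(x) = 1 + t·x²·M(x)·M(tx)`, where
`M(tx)` is the image of `M(x)` under the ring endomorphism of `ℤ[[x,t]]` fixing `t`
and sending `x` to `tx`. -/
theorem Mser_functional_eq :
    Mser = 1 + tVar * xVar ^ 2 * Mser * substTx 1 Mser := by
  open MAux in
  refine PowerSeries.ext fun n => ?_
  rw [map_add, coeff_Mser]
  have hre : tVar * xVar ^ 2 * Mser * substTx 1 Mser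
      = PowerSeries.C PowerSeries.X
        * (PowerSeries.X ^ 2 * (Mser * substTx 1 Mser)) := by
    rw [tVar, xVar]; ring
  rw [hre, PowerSeries.coeff_C_mul, PowerSeries.coeff_X_pow_mul']
  rcases lt_or_ge n 2 with hn | hn
  · rw [if_neg (by omega), mul_zero, add_zero]
    interval_cases n
    · rw [A_zero]
      simp
    · rw [A_one]
      simp [PowerSeries.coeff_one]
  · obtain ⟨d, rfl⟩ : ∃ d, n = d + 2 := ⟨n - 2, by omega⟩
    rw [if_pos (by omega), PowerSeries.coeff_one, if_neg (by omega), zero_add]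
    have he : d + 2 - 2 = d := by omega
    rw [he, A_rec d, PowerSeries.coeff_mul, Finset.mul_sum]
    refine Finset.sum_congr rfl fun p hp => ?_
    rw [coeff_Mser, substTx, pow_one, PowerSeries.coeff_rescale, coeff_Mser]
    ring
end

section
/- In ℤ[[x,t]], the generating series of Dyck-path prefixes ending at odd height satisfies the functional equation Q^o(x) = x t M(x) M(tx) (1 + x t² Q^o(x t²)), where F(tx) (resp. F(xt²)) denotes the image of F under the continuous ring endomorphism of ℤ[[x,t]] fixing t and sending x to tx (resp. to t²x). -/
open CoxeterSystem

namespace QoP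
open PowerSeries Finset

def PMN (n : ℕ) (g : ℕ → ℕ) : Prop := ∀ i < n, IsPMStep (g i) (g (i+1))
def Tail0 (n : ℕ) (g : ℕ → ℕ) : Prop := ∀ i, n < i → g i = 0
def MN (n : ℕ) (g : ℕ → ℕ) : Prop := PMN n g ∧ g 0 = 0 ∧ g n = 0 ∧ Tail0 n g
def QpN (e n : ℕ) (g : ℕ → ℕ) : Prop := PMN n g ∧ g 0 = 0 ∧ g n % 2 = e ∧ Tail0 n g
def htN (n : ℕ) (g : ℕ → ℕ) : ℕ := ∑ i ∈ Finset.range (n+1), g i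

lemma step_add1 {a b : ℕ} (h : IsPMStep a b) : IsPMStep (a+1) (b+1) := by
  unfold IsPMStep at *; omega

lemma step_sub1 {a b : ℕ} (h : IsPMStep a b) (ha : 1 ≤ a) (hb : 1 ≤ b) :
    IsPMStep (a-1) (b-1) := by
  unfold IsPMStep at *; omega

def lastZero (n : ℕ) (g : ℕ → ℕ) : ℕ := Nat.findGreatest (fun i => g i = 0) n

def cutA (n : ℕ) (g : ℕ → ℕ) : ℕ → ℕ :=
  fun i => if i ≤ lastZero n g then g i else 0

def cutB (n : ℕ) (g : ℕ → ℕ) : ℕ → ℕ :=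
  fun i => if i ≤ n - lastZero n g - 1 then g (lastZero n g + 1 + i) - 1 else 0

def glue (a b : ℕ) (A B : ℕ → ℕ) : ℕ → ℕ :=
  fun i => if i ≤ a then A i else if i ≤ a + b + 1 then B (i - (a+1)) + 1 else 0

section facts
variable {e n : ℕ} {g : ℕ → ℕ}

lemma lz_le : lastZero n g ≤ n := Nat.findGreatest_le n

lemma lz_zero (h0 : g 0 = 0) : g (lastZero n g) = 0 :=
  Nat.findGreatest_spec (P := fun i => g i = 0) (Nat.zero_le n) h0

lemma lz_pos {i : ℕ} (hi : lastZero n g < i) (hin : i ≤ n) : g i ≠ 0 :=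
  Nat.findGreatest_is_greatest (P := fun i => g i = 0) hi hin

lemma lz_lt (h0 : g 0 = 0) (hne : g n ≠ 0) : lastZero n g < n := by
  rcases Nat.lt_or_ge (lastZero n g) n with h | h
  · exact h
  · exact absurd (lz_zero h0) (by have : lastZero n g = n := le_antisymm lz_le h; rw [this]; exact hne)

lemma lz_succ_one (hq : QpN e n g) (hne : g n ≠ 0) : g (lastZero n g + 1) = 1 := by
  have hlt := lz_lt hq.2.1 hne
  have hstep := hq.1 (lastZero n g) hlt
  have h0 := lz_zero (g := g) (n := n) hq.2.1
  have hp := lz_pos (g := g) (n := n) (i := lastZero n g + 1) (by omega) (by omega)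
  unfold IsPMStep at hstep; omega

lemma lz_ge_one {i : ℕ} (hq : QpN e n g) (hi : lastZero n g < i) (hin : i ≤ n) : 1 ≤ g i := by
  have := lz_pos (g := g) (n := n) hi hin; omega

lemma cutA_MN (hq : QpN e n g) : MN (lastZero n g) (cutA n g) := by
  refine ⟨fun i hi => ?_, ?_, ?_, fun i hi => if_neg (by omega)⟩
  · have := hq.1 i (by have := lz_le (g := g) (n := n); omega)
    show IsPMStep (if i ≤ lastZero n g then g i else 0)
      (if i + 1 ≤ lastZero n g then g (i+1) else 0)
    rw [if_pos (by omega), if_pos (by omega)]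
    exact this
  · show (if 0 ≤ lastZero n g then g 0 else 0) = 0
    rw [if_pos (by omega)]; exact hq.2.1
  · show (if lastZero n g ≤ lastZero n g then g (lastZero n g) else 0) = 0
    rw [if_pos (by omega)]; exact lz_zero hq.2.1

lemma cutB_Qp (he : e < 2) (hq : QpN e n g) (hne : g n ≠ 0) :
    QpN (1-e) (n - lastZero n g - 1) (cutB n g) := by
  set a := lastZero n g with ha
  have hlt : a < n := lz_lt hq.2.1 hne
  have h1 : g (a + 1) = 1 := lz_succ_one hq hne
  refine ⟨fun i hi => ?_, ?_, ?_, fun i hi => if_neg (by omega)⟩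
  · show IsPMStep (if i ≤ n - a - 1 then g (a + 1 + i) - 1 else 0)
      (if i + 1 ≤ n - a - 1 then g (a + 1 + (i+1)) - 1 else 0)
    rw [if_pos (by omega), if_pos (by omega)]
    have hstep := hq.1 (a + 1 + i) (by omega)
    have e1 : 1 ≤ g (a + 1 + i) := lz_ge_one hq (by omega) (by omega)
    have e2 : 1 ≤ g (a + 1 + i + 1) := lz_ge_one hq (by omega) (by omega)
    have e3 : a + 1 + (i + 1) = a + 1 + i + 1 := by omega
    rw [e3]
    exact step_sub1 hstep e1 e2
  · show (if 0 ≤ n - a - 1 then g (a + 1 + 0) - 1 else 0) = 0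
    rw [if_pos (by omega)]
    have : a + 1 + 0 = a + 1 := by omega
    rw [this, h1]
  · show (if n - a - 1 ≤ n - a - 1 then g (a + 1 + (n - a - 1)) - 1 else 0) % 2 = 1 - e
    rw [if_pos (le_refl _)]
    have e1 : a + 1 + (n - a - 1) = n := by omega
    rw [e1]
    have e2 : g n % 2 = e := hq.2.2.1
    have e3 : 1 ≤ g n := by omega
    omega

lemma glue_le {a b i : ℕ} {A B : ℕ → ℕ} (hi : i ≤ a) : glue a b A B i = A i := if_pos hi

lemma glue_mid {a b i : ℕ} {A B : ℕ → ℕ} (hi : a < i) (hin : i ≤ a + b + 1) :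
    glue a b A B i = B (i - (a+1)) + 1 := by
  unfold glue; rw [if_neg (by omega), if_pos hin]

lemma glue_hi {a b i : ℕ} {A B : ℕ → ℕ} (hi : a + b + 1 < i) : glue a b A B i = 0 := by
  unfold glue; rw [if_neg (by omega), if_neg (by omega)]

lemma glue_QpN {a b : ℕ} {A B : ℕ → ℕ} (he : e < 2) (hA : MN a A) (hB : QpN (1-e) b B) :
    QpN e (a+b+1) (glue a b A B) ∧ glue a b A B (a+b+1) ≠ 0 := by
  have hend : glue a b A B (a+b+1) = B b + 1 := by
    have e1 : a + b + 1 - (a + 1) = b := by omega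
    rw [glue_mid (by omega) (le_refl _), e1]
  refine ⟨⟨fun i hi => ?_, ?_, ?_, fun i hi => glue_hi hi⟩, by rw [hend]; omega⟩
  · rcases Nat.lt_or_ge i a with hc | hc
    · rw [glue_le (by omega), glue_le (by omega)]
      exact hA.1 i hc
    rcases Nat.eq_or_lt_of_le hc with hc2 | hc2
    · rw [glue_le (by omega), glue_mid (by omega) (by omega)]
      have e1 : i + 1 - (a + 1) = 0 := by omega
      have e2 : A i = 0 := by rw [← hc2]; exact hA.2.2.1
      rw [e1, hB.2.1, e2]
      exact Or.inl rfl
    · rw [glue_mid (by omega) (by omega), glue_mid (by omega) (by omega)]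
      have e1 : i + 1 - (a + 1) = (i - (a+1)) + 1 := by omega
      rw [e1]
      exact step_add1 (hB.1 (i - (a+1)) (by omega))
  · rw [glue_le (by omega)]; exact hA.2.1
  · rw [hend]
    have := hB.2.2.1; omega

lemma lz_glue {e' a b : ℕ} {A B : ℕ → ℕ} (hA : MN a A) (hB : QpN e' b B) :
    lastZero (a+b+1) (glue a b A B) = a := by
  unfold lastZero
  rw [Nat.findGreatest_eq_iff]
  refine ⟨by omega, fun _ => by rw [glue_le (le_refl a)]; exact hA.2.2.1, fun i hi hin => ?_⟩
  rw [glue_mid hi hin]; omega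

/-- The decomposition target type. -/
def D (e n : ℕ) : Type :=
  {q : (ℕ × ℕ) × (ℕ → ℕ) × (ℕ → ℕ) //
    q.1.1 + q.1.2 + 1 = n ∧ MN q.1.1 q.2.1 ∧ QpN (1-e) q.1.2 q.2.2}

noncomputable def splitE (e n : ℕ) (he : e < 2) :
    {g : ℕ → ℕ // QpN e n g ∧ g n ≠ 0} ≃ D e n where
  toFun x := ⟨((lastZero n x.1, n - lastZero n x.1 - 1), (cutA n x.1, cutB n x.1)),
    by show lastZero n x.1 + (n - lastZero n x.1 - 1) + 1 = n
       have := lz_lt x.2.1.2.1 x.2.2; omega,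
    cutA_MN x.2.1, cutB_Qp he x.2.1 x.2.2⟩
  invFun q := ⟨glue q.1.1.1 q.1.1.2 q.1.2.1 q.1.2.2, by
    have := glue_QpN he q.2.2.1 q.2.2.2
    rw [q.2.1] at this
    exact this⟩
  left_inv x := by
    obtain ⟨g, hq, hne⟩ := x
    apply Subtype.ext
    show glue (lastZero n g) (n - lastZero n g - 1) (cutA n g) (cutB n g) = g
    have hlt : lastZero n g < n := lz_lt hq.2.1 hne
    have hn : lastZero n g + (n - lastZero n g - 1) + 1 = n := by omega
    funext i
    rcases Nat.lt_or_ge (lastZero n g) i with hc | hc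
    · rcases Nat.lt_or_ge n i with hc2 | hc2
      · rw [glue_hi (by omega)]
        exact (hq.2.2.2 i hc2).symm
      · rw [glue_mid (by omega) (by omega)]
        show (if i - (lastZero n g + 1) ≤ n - lastZero n g - 1
          then g (lastZero n g + 1 + (i - (lastZero n g + 1))) - 1 else 0) + 1 = g i
        rw [if_pos (by omega)]
        have e1 : lastZero n g + 1 + (i - (lastZero n g + 1)) = i := by omega
        rw [e1]
        have := lz_ge_one hq hc hc2
        omega
    · rw [glue_le hc]
      show (if i ≤ lastZero n g then g i else 0) = g i
      rw [if_pos hc]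
  right_inv q := by
    obtain ⟨⟨⟨a, b⟩, A, B⟩, hsum, hA, hB⟩ := q
    have hA' : MN a A := hA
    have hB' : QpN (1-e) b B := hB
    subst hsum
    apply Subtype.ext
    have hlz : lastZero (a+b+1) (glue a b A B) = a := lz_glue hA' hB'
    show ((lastZero (a+b+1) (glue a b A B), (a+b+1) - lastZero (a+b+1) (glue a b A B) - 1),
      (cutA (a+b+1) (glue a b A B), cutB (a+b+1) (glue a b A B))) = ((a, b), (A, B))
    rw [hlz]
    have e1 : a + b + 1 - a - 1 = b := by omega
    rw [e1]
    have hcutA : cutA (a+b+1) (glue a b A B) = A := by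
      funext i
      show (if i ≤ lastZero (a+b+1) (glue a b A B) then glue a b A B i else 0) = A i
      rw [hlz]
      rcases Nat.lt_or_ge a i with hc | hc
      · rw [if_neg (by omega)]
        exact (hA'.2.2.2 i hc).symm
      · rw [if_pos hc, glue_le hc]
    have hcutB : cutB (a+b+1) (glue a b A B) = B := by
      funext i
      show (if i ≤ (a+b+1) - lastZero (a+b+1) (glue a b A B) - 1
        then glue a b A B (lastZero (a+b+1) (glue a b A B) + 1 + i) - 1 else 0) = B i
      rw [hlz, e1]
      rcases Nat.lt_or_ge b i with hc | hc
      · rw [if_neg (by omega)]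
        exact (hB'.2.2.2 i hc).symm
      · rw [if_pos hc, glue_mid (by omega) (by omega)]
        have e2 : a + 1 + i - (a + 1) = i := by omega
        rw [e2]
        omega
    rw [hcutA, hcutB]

lemma ht_split (hq : QpN e n g) (hne : g n ≠ 0) :
    htN n g = htN (lastZero n g) (cutA n g)
      + htN (n - lastZero n g - 1) (cutB n g) + (n - lastZero n g) := by
  set a := lastZero n g with ha
  have hlt : a < n := lz_lt hq.2.1 hne
  have e0 : n + 1 = (a + 1) + (n - a) := by omega
  unfold htN
  rw [e0, Finset.sum_range_add]
  have e1 : ∑ i ∈ Finset.range (a+1), g i = ∑ i ∈ Finset.range (a+1), cutA n g i := by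
    refine Finset.sum_congr rfl fun i hi => ?_
    rw [Finset.mem_range] at hi
    show g i = if i ≤ a then g i else 0
    rw [if_pos (by omega)]
  have e2 : n - a = (n - a - 1) + 1 := by omega
  have e3 : ∑ i ∈ Finset.range (n - a), g (a + 1 + i)
      = ∑ i ∈ Finset.range (n - a - 1 + 1), (cutB n g i + 1) := by
    rw [← e2]
    refine Finset.sum_congr rfl fun i hi => ?_
    rw [Finset.mem_range] at hi
    show g (a + 1 + i) = (if i ≤ n - a - 1 then g (a + 1 + i) - 1 else 0) + 1
    rw [if_pos (by omega)]
    have := lz_ge_one hq (i := a + 1 + i) (by omega) (by omega)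
    omega
  rw [e1, e3, Finset.sum_add_distrib]
  simp
  omega

end facts

-- finiteness
lemma PMN.bound {n : ℕ} {g : ℕ → ℕ} (hp : PMN n g) (h0 : g 0 = 0) :
    ∀ i, i ≤ n → g i ≤ i := by
  intro i hi
  induction i with
  | zero => simp [h0]
  | succ k ih =>
    have hk := hp k (by omega)
    have := ih (by omega)
    unfold IsPMStep at hk
    omega

lemma finite_walks (n : ℕ) (P : (ℕ → ℕ) → Prop)
    (hP : ∀ g, P g → (∀ i, i ≤ n → g i ≤ n) ∧ Tail0 n g) : Finite {g : ℕ → ℕ // P g} := by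
  apply Finite.of_injective
    (fun (x : {g : ℕ → ℕ // P g}) (i : Fin (n+1)) =>
      (⟨x.1 i.1, by have := (hP x.1 x.2).1 i.1 (by omega); omega⟩ : Fin (n+1)))
  intro x y hxy
  apply Subtype.ext; funext i
  rcases le_or_gt i n with h | h
  · have := congrFun hxy ⟨i, by omega⟩
    simpa using congrArg Fin.val this
  · rw [(hP x.1 x.2).2 i h, (hP y.1 y.2).2 i h]

instance (n : ℕ) : Finite {g : ℕ → ℕ // MN n g} :=
  finite_walks n _ (fun g hg => ⟨fun i hi => le_trans (hg.1.bound hg.2.1 i hi) hi, hg.2.2.2⟩)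

instance (e n : ℕ) : Finite {g : ℕ → ℕ // QpN e n g} :=
  finite_walks n _ (fun g hg => ⟨fun i hi => le_trans (hg.1.bound hg.2.1 i hi) hi, hg.2.2.2⟩)

instance (e n : ℕ) : Finite {g : ℕ → ℕ // QpN e n g ∧ g n ≠ 0} :=
  finite_walks n _ (fun g hg => ⟨fun i hi => le_trans (hg.1.1.bound hg.1.2.1 i hi) hi, hg.1.2.2.2⟩)

noncomputable instance (n : ℕ) : Fintype {g : ℕ → ℕ // MN n g} := Fintype.ofFinite _
noncomputable instance (e n : ℕ) : Fintype {g : ℕ → ℕ // QpN e n g} := Fintype.ofFinite _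
noncomputable instance (e n : ℕ) : Fintype {g : ℕ → ℕ // QpN e n g ∧ g n ≠ 0} := Fintype.ofFinite _

noncomputable def mS (n : ℕ) : PowerSeries ℤ :=
  ∑ A : {g : ℕ → ℕ // MN n g}, (X : PowerSeries ℤ) ^ htN n A.1
noncomputable def pS (e n : ℕ) : PowerSeries ℤ :=
  ∑ g : {g : ℕ → ℕ // QpN e n g}, (X : PowerSeries ℤ) ^ htN n g.1
noncomputable def sS (e n : ℕ) : PowerSeries ℤ :=
  ∑ g : {g : ℕ → ℕ // QpN e n g ∧ g n ≠ 0}, (X : PowerSeries ℤ) ^ htN n g.1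

noncomputable def DtoSigma (e n : ℕ) (hn : 1 ≤ n) :
    D e n ≃ Σ p : (Finset.HasAntidiagonal.antidiagonal (n-1) : Finset (ℕ×ℕ)),
      {A : ℕ → ℕ // MN (p : ℕ×ℕ).1 A} × {B : ℕ → ℕ // QpN (1-e) (p : ℕ×ℕ).2 B} where
  toFun q := ⟨⟨q.1.1, by rw [Finset.HasAntidiagonal.mem_antidiagonal]; have := q.2.1; omega⟩,
    ⟨q.1.2.1, q.2.2.1⟩, ⟨q.1.2.2, q.2.2.2⟩⟩
  invFun s := ⟨((s.1.1.1, s.1.1.2), (s.2.1.1, s.2.2.1)), by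
      have h2 := Finset.HasAntidiagonal.mem_antidiagonal.1 s.1.2
      show (s.1 : ℕ×ℕ).1 + (s.1 : ℕ×ℕ).2 + 1 = n
      omega, s.2.1.2, s.2.2.2⟩
  left_inv q := by rcases q with ⟨⟨⟨a,b⟩,A,B⟩,h⟩; rfl
  right_inv s := by rcases s with ⟨⟨⟨a,b⟩,hm⟩,⟨A,hA⟩,⟨B,hB⟩⟩; rfl

lemma prod_sum (a b c e : ℕ) :
    ∑ y : {A : ℕ → ℕ // MN a A} × {B : ℕ → ℕ // QpN e b B},
      (X : PowerSeries ℤ) ^ (htN a y.1.1 + htN b y.2.1 + c)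
    = X ^ c * mS a * pS e b := by
  have e1 : ∀ hA : ℕ, ∑ B : {B : ℕ → ℕ // QpN e b B}, (X : PowerSeries ℤ)^(hA + htN b B.1 + c)
      = X ^ hA * pS e b * X ^ c := by
    intro hA
    simp_rw [pow_add]
    rw [pS, Finset.mul_sum, Finset.sum_mul]
  rw [Fintype.sum_prod_type]
  simp_rw [e1]
  rw [← Finset.sum_mul, ← Finset.sum_mul]
  rw [mS]
  ring

lemma sS_eq (e n : ℕ) (he : e < 2) (hn : 1 ≤ n) :
    sS e n = ∑ p ∈ Finset.HasAntidiagonal.antidiagonal (n-1), X ^ (p.2 + 1) * mS p.1 * pS (1-e) p.2 := by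
  haveI : Finite (D e n) := Finite.of_equiv _ (splitE e n he)
  haveI : Fintype (D e n) := Fintype.ofFinite _
  have step1 : sS e n = ∑ q : D e n,
      (X : PowerSeries ℤ) ^ (htN q.1.1.1 q.1.2.1 + htN q.1.1.2 q.1.2.2 + (q.1.1.2 + 1)) := by
    rw [sS]
    refine Fintype.sum_equiv (splitE e n he) _ _ fun x => ?_
    congr 1
    have h1 := ht_split x.2.1 x.2.2
    have hlt : lastZero n x.1 < n := lz_lt x.2.1.2.1 x.2.2
    show htN n x.1 = htN (lastZero n x.1) (cutA n x.1)
      + htN (n - lastZero n x.1 - 1) (cutB n x.1) + ((n - lastZero n x.1 - 1) + 1)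
    omega
  rw [step1]
  have step2 := Fintype.sum_equiv (DtoSigma e n hn)
    (fun q : D e n => (X : PowerSeries ℤ) ^ (htN q.1.1.1 q.1.2.1 + htN q.1.1.2 q.1.2.2 + (q.1.1.2 + 1)))
    (fun s => (X : PowerSeries ℤ) ^ (htN (s.1 : ℕ×ℕ).1 s.2.1.1 + htN (s.1 : ℕ×ℕ).2 s.2.2.1 + ((s.1 : ℕ×ℕ).2 + 1)))
    (fun q => rfl)
  rw [step2]
  rw [← Finset.univ_sigma_univ, Finset.sum_sigma]
  rw [← Finset.sum_attach (Finset.HasAntidiagonal.antidiagonal (n-1))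
    (fun p => (X : PowerSeries ℤ) ^ (p.2 + 1) * mS p.1 * pS (1-e) p.2)]
  refine Finset.sum_congr rfl fun p _ => ?_
  exact prod_sum (p : ℕ×ℕ).1 (p : ℕ×ℕ).2 ((p : ℕ×ℕ).2 + 1) (1-e)

lemma pS_one_eq_sS (n : ℕ) : pS 1 n = sS 1 n := by
  rw [pS, sS]
  refine Fintype.sum_equiv (Equiv.subtypeEquivRight fun g => ?_) _ _ (fun x => rfl)
  unfold QpN
  constructor
  · intro h; exact ⟨h, by have := h.2.2.1; omega⟩
  · intro h; exact h.1

instance (e n : ℕ) : Finite {g : ℕ → ℕ // QpN e n g ∧ g n = 0} :=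
  finite_walks n _ (fun g hg => ⟨fun i hi => le_trans (hg.1.1.bound hg.1.2.1 i hi) hi, hg.1.2.2.2⟩)

noncomputable instance (e n : ℕ) : Fintype {g : ℕ → ℕ // QpN e n g ∧ g n = 0} := Fintype.ofFinite _

lemma pS_zero_eq (n : ℕ) : pS 0 n = mS n + sS 0 n := by
  classical
  let E : {g : ℕ → ℕ // QpN 0 n g ∧ g n = 0} ⊕ {g : ℕ → ℕ // QpN 0 n g ∧ g n ≠ 0}
      ≃ {g : ℕ → ℕ // QpN 0 n g} :=
  { toFun := Sum.elim (fun a => ⟨a.1, a.2.1⟩) (fun a => ⟨a.1, a.2.1⟩)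
    invFun := fun y => if h : y.1 n = 0 then Sum.inl ⟨y.1, y.2, h⟩ else Sum.inr ⟨y.1, y.2, h⟩
    left_inv := by rintro (⟨a,ha⟩|⟨a,ha⟩) <;> simp [ha.2]
    right_inv := by intro y; by_cases h : y.1 n = 0 <;> simp [h] }
  have h1 := Fintype.sum_equiv E (fun x => (X : PowerSeries ℤ) ^ htN n (E x).1)
      (fun y => (X : PowerSeries ℤ) ^ htN n y.1) (fun x => rfl)
  rw [pS, ← h1, Fintype.sum_sum_type]
  congr 1
  · show ∑ a : {g : ℕ → ℕ // QpN 0 n g ∧ g n = 0}, (X : PowerSeries ℤ) ^ htN n a.1 = mS n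
    rw [mS]
    refine Fintype.sum_equiv (Equiv.subtypeEquivRight (fun g => ?_)) _ _ (fun x => rfl)
    unfold QpN MN
    constructor
    · intro h; exact ⟨h.1.1, h.1.2.1, h.2, h.1.2.2.2⟩
    · intro h; exact ⟨⟨h.1, h.2.1, by omega, h.2.2.2⟩, h.2.2.1⟩

lemma pS_one_zero : pS 1 0 = 0 := by
  rw [pS]
  haveI : IsEmpty {g : ℕ → ℕ // QpN 1 0 g} := ⟨fun x => by
    have h1 := x.2.2.1
    have h2 := x.2.2.2.1
    omega⟩
  simp

lemma sS_zero (e : ℕ) : sS e 0 = 0 := by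
  rw [sS]
  haveI : IsEmpty {g : ℕ → ℕ // QpN e 0 g ∧ g 0 ≠ 0} := ⟨fun x => x.2.2 x.2.1.2.1⟩
  simp


-- transfer between `Fin`-indexed and `ℕ`-indexed walks
def padd (n : ℕ) (h : Fin (n+1) → ℕ) : ℕ → ℕ := fun i => if hi : i < n + 1 then h ⟨i, hi⟩ else 0

lemma padd_lt (n : ℕ) (h : Fin (n+1) → ℕ) (i : ℕ) (hi : i < n + 1) :
    padd n h i = h ⟨i, hi⟩ := dif_pos hi

lemma totalHeight_padd (n : ℕ) (h : Fin (n+1) → ℕ) : totalHeight n h = htN n (padd n h) := by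
  rw [totalHeight, htN, Finset.sum_range]
  exact Finset.sum_congr rfl fun i _ => by rw [padd_lt n h i.1 i.2]

lemma isPMWalk_iff (n : ℕ) (h : Fin (n+1) → ℕ) : IsPMWalk n h ↔ PMN n (padd n h) := by
  constructor
  · intro hw i hi
    rw [padd_lt n h i (by omega), padd_lt n h (i+1) (by omega)]
    simpa using hw ⟨i, hi⟩
  · intro hw i
    obtain ⟨i, hi⟩ := i
    have := hw i hi
    rw [padd_lt n h i (by omega), padd_lt n h (i+1) (by omega)] at this
    simpa using this

lemma padd_zero (n : ℕ) (h : Fin (n+1) → ℕ) : padd n h 0 = h 0 := by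
  rw [padd_lt n h 0 (by omega)]; rfl

lemma padd_last (n : ℕ) (h : Fin (n+1) → ℕ) : padd n h n = h (Fin.last n) := by
  rw [padd_lt n h n (by omega)]; rfl

def equivM (n : ℕ) : {h : Fin (n+1) → ℕ // IsMWalk n h} ≃ {g : ℕ → ℕ // MN n g} where
  toFun x := ⟨padd n x.1, (isPMWalk_iff n x.1).1 x.2.1,
    by rw [padd_zero]; exact x.2.2.1, by rw [padd_last]; exact x.2.2.2,
    fun i hi => dif_neg (by omega)⟩
  invFun y := ⟨fun i => y.1 i.1, by
    refine ⟨fun i => ?_, y.2.2.1, y.2.2.2.1⟩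
    show IsPMStep (y.1 i.castSucc.1) (y.1 i.succ.1)
    simp only [Fin.coe_castSucc, Fin.val_succ]
    exact y.2.1 i.1 i.2⟩
  left_inv x := by
    apply Subtype.ext; funext i
    exact padd_lt n x.1 i.1 i.2
  right_inv y := by
    apply Subtype.ext; funext i
    show padd n (fun j : Fin (n+1) => y.1 j.1) i = y.1 i
    by_cases hi : i < n + 1
    · rw [padd_lt _ _ i hi]
    · exact (dif_neg hi).trans (y.2.2.2.2 i (by omega)).symm

def equivQo (n : ℕ) : {h : Fin (n+1) → ℕ // IsQoWalk n h} ≃ {g : ℕ → ℕ // QpN 1 n g} where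
  toFun x := ⟨padd n x.1, (isPMWalk_iff n x.1).1 x.2.1.1,
    by rw [padd_zero]; exact x.2.1.2,
    by rw [padd_last]; exact Nat.odd_iff.1 x.2.2,
    fun i hi => dif_neg (by omega)⟩
  invFun y := ⟨fun i => y.1 i.1, by
    refine ⟨⟨fun i => ?_, y.2.2.1⟩, Nat.odd_iff.2 y.2.2.2.1⟩
    show IsPMStep (y.1 i.castSucc.1) (y.1 i.succ.1)
    simp only [Fin.coe_castSucc, Fin.val_succ]
    exact y.2.1 i.1 i.2⟩
  left_inv x := by
    apply Subtype.ext; funext i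
    exact padd_lt n x.1 i.1 i.2
  right_inv y := by
    apply Subtype.ext; funext i
    show padd n (fun j : Fin (n+1) => y.1 j.1) i = y.1 i
    by_cases hi : i < n + 1
    · rw [padd_lt _ _ i hi]
    · exact (dif_neg hi).trans (y.2.2.2.2 i (by omega)).symm

instance (n : ℕ) : Finite {h : Fin (n+1) → ℕ // IsMWalk n h} :=
  Finite.of_equiv _ (equivM n).symm
instance (n : ℕ) : Finite {h : Fin (n+1) → ℕ // IsQoWalk n h} :=
  Finite.of_equiv _ (equivQo n).symm
noncomputable instance (n : ℕ) : Fintype {h : Fin (n+1) → ℕ // IsMWalk n h} := Fintype.ofFinite _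
noncomputable instance (n : ℕ) : Fintype {h : Fin (n+1) → ℕ // IsQoWalk n h} := Fintype.ofFinite _

lemma coeff_walkSeries (P : (n : ℕ) → (Fin (n + 1) → ℕ) → Prop) (n : ℕ)
    [Fintype {h : Fin (n + 1) → ℕ // P n h}] :
    PowerSeries.coeff n (walkSeries P) =
      ∑ h : {h : Fin (n + 1) → ℕ // P n h}, (X : PowerSeries ℤ) ^ totalHeight n h.1 := by
  classical
  rw [walkSeries, coeff_mk]
  ext k
  rw [coeff_mk, map_sum]
  simp only [coeff_X_pow]
  rw [Finset.sum_boole]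
  have e1 : Nat.card {h : Fin (n + 1) → ℕ // P n h ∧ totalHeight n h = k}
      = Nat.card {x : {h : Fin (n + 1) → ℕ // P n h} // k = totalHeight n x.1} :=
    Nat.card_congr ((Equiv.subtypeEquivRight (fun x => eq_comm)).trans
      (Equiv.subtypeSubtypeEquivSubtypeInter (P n) (fun h => totalHeight n h = k))).symm
  rw [e1, Nat.card_eq_fintype_card, Fintype.card_subtype]

lemma coeff_Mser (n : ℕ) : PowerSeries.coeff n Mser = mS n := by
  rw [Mser, coeff_walkSeries IsMWalk n, mS]
  exact Fintype.sum_equiv (equivM n) _ _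
    (fun x => by rw [totalHeight_padd]; rfl)

lemma coeff_QoSer (n : ℕ) : PowerSeries.coeff n QoSer = pS 1 n := by
  rw [QoSer, coeff_walkSeries IsQoWalk n, pS]
  exact Fintype.sum_equiv (equivQo n) _ _
    (fun x => by rw [totalHeight_padd]; rfl)

-- the master combinatorial identities
lemma L2 (k : ℕ) : pS 1 (k+1)
    = ∑ p ∈ Finset.HasAntidiagonal.antidiagonal k, X ^ (p.2+1) * mS p.1 * pS 0 p.2 := by
  rw [pS_one_eq_sS, sS_eq 1 (k+1) (by omega) (by omega)]
  norm_num

lemma split2 (k : ℕ) : pS 1 (k+1)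
    = (∑ p ∈ Finset.HasAntidiagonal.antidiagonal k, X ^ (p.2+1) * mS p.1 * mS p.2)
      + ∑ p ∈ Finset.HasAntidiagonal.antidiagonal k, X ^ (p.2+1) * mS p.1 * sS 0 p.2 := by
  rw [L2, ← Finset.sum_add_distrib]
  refine Finset.sum_congr rfl fun p _ => by rw [pS_zero_eq]; ring

lemma first_term (k : ℕ) :
    ∑ p ∈ Finset.HasAntidiagonal.antidiagonal k, X ^ (p.2+1) * mS p.1 * mS p.2
      = X * ∑ p ∈ Finset.HasAntidiagonal.antidiagonal k, mS p.1 * (X ^ p.2 * mS p.2) := by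
  rw [Finset.mul_sum]
  refine Finset.sum_congr rfl fun p _ => ?_
  rw [pow_succ]
  ring

lemma second_term_zero :
    ∑ p ∈ Finset.HasAntidiagonal.antidiagonal 0, (X : PowerSeries ℤ) ^ (p.2+1) * mS p.1 * sS 0 p.2 = 0 := by
  rw [Finset.Nat.sum_antidiagonal_eq_sum_range_succ_mk]
  simp [sS_zero]

lemma second_term (j : ℕ) :
    ∑ p ∈ Finset.HasAntidiagonal.antidiagonal (j+1), (X : PowerSeries ℤ) ^ (p.2+1) * mS p.1 * sS 0 p.2
      = X^3 * ∑ p ∈ Finset.HasAntidiagonal.antidiagonal j, mS p.1 *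
          ∑ q ∈ Finset.HasAntidiagonal.antidiagonal p.2, (X ^ q.1 * mS q.1) * (X ^ (2*q.2) * pS 1 q.2) := by
  rw [Finset.Nat.sum_antidiagonal_eq_sum_range_succ_mk,
    Finset.Nat.sum_antidiagonal_eq_sum_range_succ_mk, Finset.sum_range_succ]
  have hlast : (X : PowerSeries ℤ) ^ (j + 1 - (j+1) + 1) * mS (j+1) * sS 0 (j + 1 - (j+1)) = 0 := by
    have : j + 1 - (j+1) = 0 := by omega
    rw [this, sS_zero, mul_zero]
  rw [hlast, add_zero, Finset.mul_sum]
  refine Finset.sum_congr rfl fun i hi => ?_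
  rw [Finset.mem_range] at hi
  have hb : 1 ≤ j + 1 - i := by omega
  rw [sS_eq 0 (j + 1 - i) (by omega) hb]
  have hj : j + 1 - i - 1 = j - i := by omega
  rw [hj]
  rw [Finset.mul_sum, Finset.mul_sum, Finset.mul_sum]
  refine Finset.sum_congr rfl fun q hq => ?_
  rw [Finset.HasAntidiagonal.mem_antidiagonal] at hq
  have hE : (j + 1 - i + 1) + (q.2 + 1) = 3 + (q.1 + 2*q.2) := by omega
  calc X ^ (j + 1 - i + 1) * mS i * (X ^ (q.2+1) * mS q.1 * pS (1-0) q.2)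
      = X ^ ((j + 1 - i + 1) + (q.2+1)) * (mS i * (mS q.1 * pS 1 q.2)) := by
        rw [pow_add]; norm_num; ring
    _ = X ^ (3 + (q.1 + 2*q.2)) * (mS i * (mS q.1 * pS 1 q.2)) := by rw [hE]
    _ = X^3 * (mS i * ((X ^ q.1 * mS q.1) * (X ^ (2*q.2) * pS 1 q.2))) := by
        rw [pow_add, pow_add]; ring

end QoP

/-- The generating series of Dyck-path prefixes ending at odd height satisfies
`Q^o(x) = x·t·M(x)·M(tx)·(1 + x·t²·Q^o(xt²))`, where `F(tx)` (resp. `F(xt²)`) is the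
image of `F` under the ring endomorphism of `ℤ[[x,t]]` fixing `t` and sending `x` to
`tx` (resp. to `t²x`). -/
theorem QoSer_functional_eq :
    QoSer = xVar * tVar * Mser * substTx 1 Mser *
      (1 + xVar * tVar ^ 2 * substTx 2 QoSer) := by
  open QoP PowerSeries in
  have hring : xVar * tVar * Mser * substTx 1 Mser *
      (1 + xVar * tVar ^ 2 * substTx 2 QoSer)
    = tVar * (xVar * (Mser * substTx 1 Mser))
      + tVar ^ 3 * (xVar * (xVar * (Mser * (substTx 1 Mser * substTx 2 QoSer)))) := by
    ring
  rw [hring]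
  apply PowerSeries.ext
  intro n
  rw [map_add]
  have htv : tVar = PowerSeries.C X := rfl
  have htv3 : tVar ^ 3 = PowerSeries.C (X ^ 3) := by
    rw [htv, ← map_pow]
  have hx : xVar = (PowerSeries.X : PowerSeries (PowerSeries ℤ)) := rfl
  rw [htv3, htv, hx, coeff_C_mul, coeff_C_mul]
  have hsub1 : ∀ m, PowerSeries.coeff m (substTx 1 Mser) = X ^ m * mS m := by
    intro m
    rw [substTx, coeff_rescale, coeff_Mser, pow_one]
  have hsub2 : ∀ m, PowerSeries.coeff m (substTx 2 QoSer) = X ^ (2*m) * pS 1 m := by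
    intro m
    rw [substTx, coeff_rescale, coeff_QoSer, ← pow_mul]
  have hMM : ∀ m, PowerSeries.coeff m (Mser * substTx 1 Mser)
      = ∑ p ∈ Finset.HasAntidiagonal.antidiagonal m, mS p.1 * (X ^ p.2 * mS p.2) := by
    intro m
    rw [coeff_mul]
    exact Finset.sum_congr rfl fun p _ => by rw [coeff_Mser, hsub1]
  have hH : ∀ m, PowerSeries.coeff m (Mser * (substTx 1 Mser * substTx 2 QoSer))
      = ∑ p ∈ Finset.HasAntidiagonal.antidiagonal m, mS p.1 *
          ∑ q ∈ Finset.HasAntidiagonal.antidiagonal p.2, (X ^ q.1 * mS q.1) * (X ^ (2*q.2) * pS 1 q.2) := by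
    intro m
    rw [coeff_mul]
    refine Finset.sum_congr rfl fun p _ => ?_
    rw [coeff_Mser, coeff_mul]
    congr 1
    exact Finset.sum_congr rfl fun q _ => by rw [hsub1, hsub2]
  rw [coeff_QoSer]
  match n with
  | 0 =>
      rw [coeff_zero_X_mul, coeff_zero_X_mul, pS_one_zero]
      ring
  | 1 =>
      rw [coeff_succ_X_mul, coeff_succ_X_mul, coeff_zero_X_mul]
      rw [hMM 0]
      rw [split2 0, second_term_zero, add_zero, first_term]
      ring
  | (j+2) =>
      rw [coeff_succ_X_mul, coeff_succ_X_mul, coeff_succ_X_mul]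
      rw [hMM (j+1), hH j]
      rw [split2 (j+1), second_term j, first_term]
end

section
/- Let n ≥ 3 be an odd integer. Then the set of fully commutative involutions in the affine Coxeter group of type Ã_{n-1} is finite. -/
open CoxeterSystem

/-- A single commutation move: transposition of two adjacent letters `a`, `b`
with `M a b = 2`. -/
def CommMove {B : Type*} (M : CoxeterMatrix B) (w w' : List B) : Prop :=
  ∃ (u v : List B) (a b : B), M a b = 2 ∧ w = u ++ a :: b :: v ∧ w' = u ++ b :: a :: v

/-- Commutation equivalence of words: two words are commutation-equivalent if one can be
obtained from the other by a sequence of transpositions of adjacent commuting letters. -/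
def CommEquiv {B : Type*} (M : CoxeterMatrix B) : List B → List B → Prop :=
  Relation.EqvGen (CommMove M)

/-- An element is fully commutative if all its reduced words are commutation-equivalent. -/
def IsFullyCommutative {B W : Type*} [Group W] {M : CoxeterMatrix B}
    (cs : CoxeterSystem M W) (w : W) : Prop :=
  ∀ u v : List B, cs.IsReduced u → cs.wordProd u = w →
    cs.IsReduced v → cs.wordProd v = w → CommEquiv M u v

/-- A fully commutative involution (the identity is allowed). -/
def IsFCInvolution {B W : Type*} [Group W] {M : CoxeterMatrix B}
    (cs : CoxeterSystem M W) (w : W) : Prop :=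
  IsFullyCommutative cs w ∧ w * w = 1

/-- The Coxeter matrix of affine type `Ã_{n-1}` (for `n ≥ 3`): generators
`s_0, …, s_{n-1}` (index `k : Fin n` corresponds to `s_k`), with `m(s_i, s_j) = 3`
if `i - j ≡ ±1 (mod n)` and `m(s_i, s_j) = 2` otherwise (for `i ≠ j`). -/
def affineA (n : ℕ) : CoxeterMatrix (Fin n) where
  M := Matrix.of fun i j : Fin n =>
    if (i : ℕ) = (j : ℕ) then 1
    else if (i : ℕ) + 1 = (j : ℕ) ∨ (j : ℕ) + 1 = (i : ℕ)
        ∨ ((i : ℕ) = 0 ∧ (j : ℕ) + 1 = n) ∨ ((j : ℕ) = 0 ∧ (i : ℕ) + 1 = n) then 3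
    else 2
  isSymm := by
    ext i j
    simp only [Matrix.transpose_apply, Matrix.of_apply]
    split_ifs <;> omega
  diagonal := by intro i; simp [Matrix.of_apply]
  off_diagonal := by
    intro i j hij
    have h : (i : ℕ) ≠ (j : ℕ) := fun h => hij (Fin.ext h)
    simp only [Matrix.of_apply]
    split_ifs <;> omega

open List


section Generic
variable {B : Type*} {M : CoxeterMatrix B}

lemma CommMove.perm {w w' : List B} (h : CommMove M w w') : w.Perm w' := by
  obtain ⟨u, v, a, b, _, rfl, rfl⟩ := h
  exact List.Perm.append_left u (List.Perm.swap b a v)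

lemma CommEquiv.perm {w w' : List B} (h : CommEquiv M w w') : w.Perm w' := by
  induction h with
  | rel _ _ h => exact h.perm
  | refl _ => exact List.Perm.refl _
  | symm _ _ _ ih => exact ih.symm
  | trans _ _ _ _ _ ih₁ ih₂ => exact ih₁.trans ih₂

variable {W : Type*} [Group W] (cs : CoxeterSystem M W)

lemma simple_comm {a b : B} (hab : M a b = 2) :
    cs.simple a * cs.simple b = cs.simple b * cs.simple a := by
  have h := cs.simple_mul_simple_pow a b
  rw [hab, sq] at h
  have h1 : (cs.simple a * cs.simple b)⁻¹ = cs.simple a * cs.simple b :=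
    inv_eq_of_mul_eq_one_right h
  rw [mul_inv_rev, cs.inv_simple, cs.inv_simple] at h1
  exact h1.symm

lemma commEquiv_wordProd {w w' : List B} (h : CommEquiv M w w') :
    cs.wordProd w = cs.wordProd w' := by
  induction h with
  | rel _ _ h =>
    obtain ⟨u, v, a, b, hab, rfl, rfl⟩ := h
    simp only [cs.wordProd_append, cs.wordProd_cons]
    have : cs.simple a * (cs.simple b * cs.wordProd v)
        = cs.simple b * (cs.simple a * cs.wordProd v) := by
      rw [← mul_assoc, simple_comm cs hab, mul_assoc]
    rw [this]
  | refl _ => rfl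
  | symm _ _ _ ih => exact ih.symm
  | trans _ _ _ _ _ ih₁ ih₂ => exact ih₁.trans ih₂

lemma commEquiv_filter (p : B → Bool) (hp : ∀ a b, M a b = 2 → p a = true → p b = true → False)
    {w w' : List B} (h : CommEquiv M w w') : w.filter p = w'.filter p := by
  induction h with
  | rel _ _ h =>
    obtain ⟨u, v, a, b, hab, rfl, rfl⟩ := h
    simp only [List.filter_append, List.filter_cons]
    by_cases ha : p a <;> by_cases hb : p b
    · exact (hp a b hab ha hb).elim
    · simp [ha, hb]
    · simp [ha, hb]
    · simp [ha, hb]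
  | refl _ => rfl
  | symm _ _ _ ih => exact ih.symm
  | trans _ _ _ _ _ ih₁ ih₂ => exact ih₁.trans ih₂

lemma commEquiv_push (s : B) (p : List B) (hc : ∀ c ∈ p, M s c = 2) (x v : List B) :
    CommEquiv M (x ++ s :: (p ++ v)) (x ++ (p ++ s :: v)) := by
  induction p generalizing x with
  | nil => exact Relation.EqvGen.refl _
  | cons c p ih =>
    have h1 : CommMove M (x ++ s :: (c :: p ++ v)) ((x ++ [c]) ++ s :: (p ++ v)) := by
      refine ⟨x, p ++ v, s, c, hc c List.mem_cons_self, ?_, ?_⟩ <;> simp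
    have h2 := ih (fun d hd => hc d (List.mem_cons_of_mem c hd)) (x ++ [c])
    refine Relation.EqvGen.trans _ _ _ (Relation.EqvGen.rel _ _ h1) ?_
    have h3 : (x ++ [c]) ++ (p ++ s :: v) = x ++ (c :: p ++ s :: v) := by simp
    rw [← h3]
    exact h2

lemma braid {a b : B} (h : M a b = 3) :
    cs.simple a * cs.simple b * cs.simple a = cs.simple b * cs.simple a * cs.simple b := by
  have h3 := cs.simple_mul_simple_pow a b
  rw [h] at h3
  have e1 : (cs.simple a * cs.simple b) ^ 3 =
      (cs.simple a * cs.simple b * cs.simple a) * (cs.simple b * cs.simple a * cs.simple b) := by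
    simp [pow_succ, mul_assoc]
  have e2 : (cs.simple a * cs.simple b * cs.simple a) * (cs.simple b * cs.simple a * cs.simple b)
      = 1 := by rw [← e1, h3]
  have e3 : cs.simple a * cs.simple b * cs.simple a
      = (cs.simple b * cs.simple a * cs.simple b)⁻¹ := eq_inv_of_mul_eq_one_left e2
  rw [e3]; simp [mul_inv_rev, cs.inv_simple, mul_assoc]

lemma simple_comm_wordProd (s : B) (y : List B) (h : ∀ c ∈ y, M s c = 2) :
    cs.simple s * cs.wordProd y = cs.wordProd y * cs.simple s := by
  induction y with
  | nil => simp [cs.wordProd_nil]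
  | cons c y ih =>
    rw [cs.wordProd_cons, ← mul_assoc, simple_comm cs (h c List.mem_cons_self), mul_assoc,
      ih (fun d hd => h d (List.mem_cons_of_mem c hd)), ← mul_assoc]

end Generic

section AffineAFacts
variable {n : ℕ}

lemma affA_apply (s c : Fin n) : affineA n s c =
    (if (s : ℕ) = (c : ℕ) then 1
     else if (s : ℕ) + 1 = (c : ℕ) ∨ (c : ℕ) + 1 = (s : ℕ)
         ∨ ((s : ℕ) = 0 ∧ (c : ℕ) + 1 = n) ∨ ((c : ℕ) = 0 ∧ (s : ℕ) + 1 = n) then 3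
     else 2) := rfl

variable [NeZero n]

lemma val_add_one (hn : 3 ≤ n) (s : Fin n) :
    ((s + 1 : Fin n) : ℕ) = if (s : ℕ) + 1 = n then 0 else (s : ℕ) + 1 := by
  have h1 : ((1 : Fin n) : ℕ) = 1 := by
    rw [Fin.val_one']
    exact Nat.mod_eq_of_lt (by omega)
  have hs := s.isLt
  rw [Fin.val_add, h1]
  split_ifs with h
  · rw [h, Nat.mod_self]
  · exact Nat.mod_eq_of_lt (by omega)

lemma M_eq_two_iff (hn : 3 ≤ n) (s c : Fin n) :
    affineA n s c = 2 ↔ (c ≠ s ∧ c ≠ s + 1 ∧ s ≠ c + 1) := by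
  have hs := s.isLt
  have hc := c.isLt
  simp only [Ne, Fin.ext_iff, val_add_one hn, affA_apply]
  split_ifs <;> omega

lemma M_adj (hn : 3 ≤ n) (s c : Fin n) (h : c = s + 1 ∨ s = c + 1) : affineA n s c = 3 := by
  have hs := s.isLt
  have hc := c.isLt
  simp only [Fin.ext_iff, val_add_one hn] at h
  rw [affA_apply]
  split_ifs at h ⊢ <;> omega

lemma M_diag (s : Fin n) : affineA n s s = 1 := (affineA n).diagonal s

lemma self_ne_add_one (hn : 3 ≤ n) (s : Fin n) : s ≠ s + 1 := by
  intro h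
  have hs := s.isLt
  rw [Fin.ext_iff, val_add_one hn] at h
  split_ifs at h <;> omega

end AffineAFacts

section ListFacts
variable {α : Type*}

lemma exists_first_split [DecidableEq α] {a : α} :
    ∀ {u : List α}, a ∈ u → ∃ x y, u = x ++ a :: y ∧ a ∉ x := by
  intro u hu
  induction u with
  | nil => exact absurd hu List.not_mem_nil
  | cons c u ih =>
    by_cases hc : c = a
    · exact ⟨[], u, by simp [hc], List.not_mem_nil⟩
    · have ha : a ∈ u := by
        rcases List.mem_cons.mp hu with h | h
        · exact absurd h.symm hc
        · exact h
      obtain ⟨x, y, rfl, hx⟩ := ih ha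
      refine ⟨c :: x, y, rfl, ?_⟩
      simp only [List.mem_cons, not_or]
      exact ⟨fun h => hc h.symm, hx⟩

lemma filter_head {p : α → Bool} :
    ∀ {u B : List α} {c : α}, u.filter p = c :: B →
      ∃ y z, u = y ++ c :: z ∧ (∀ e ∈ y, p e = false) ∧ z.filter p = B := by
  intro u
  induction u with
  | nil => intro B c h; simp at h
  | cons e u ih =>
    intro B c h
    by_cases he : p e
    · rw [List.filter_cons_of_pos he] at h
      obtain ⟨rfl, rfl⟩ := List.cons.inj h
      exact ⟨[], u, by simp, by simp, rfl⟩
    · rw [List.filter_cons_of_neg he] at h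
      obtain ⟨y, z, rfl, hy, hz⟩ := ih h
      refine ⟨e :: y, z, rfl, ?_, hz⟩
      intro d hd
      rcases List.mem_cons.mp hd with rfl | hd
      · exact Bool.eq_false_iff.mpr he
      · exact hy d hd

lemma filter_split {p : α → Bool} {u A B : List α} {c d : α}
    (h : u.filter p = A ++ c :: d :: B) :
    ∃ x y z, u = x ++ c :: y ++ d :: z ∧ ∀ e ∈ y, p e = false := by
  induction A generalizing u with
  | nil =>
    obtain ⟨y1, z1, rfl, hy1, hz1⟩ := filter_head h
    obtain ⟨y2, z2, rfl, hy2, hz2⟩ := filter_head hz1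
    exact ⟨y1, y2, z2, by simp, hy2⟩
  | cons a A ih =>
    obtain ⟨y1, z1, rfl, hy1, hz1⟩ := filter_head h
    obtain ⟨x, y, z, rfl, hy⟩ := ih hz1
    exact ⟨y1 ++ a :: x, y, z, by simp, hy⟩

lemma take_get_get_drop (V : List α) (i : ℕ) (h : i + 1 < V.length) :
    V = V.take i ++ V.get ⟨i, by omega⟩ :: V.get ⟨i + 1, h⟩ :: V.drop (i + 2) := by
  have h1 : V.drop i = V.get ⟨i, by omega⟩ :: V.drop (i + 1) := by
    rw [List.drop_eq_getElem_cons (by omega)]; rfl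
  have h2 : V.drop (i + 1) = V.get ⟨i + 1, h⟩ :: V.drop (i + 2) := by
    rw [List.drop_eq_getElem_cons (by omega)]; rfl
  conv_lhs => rw [← List.take_append_drop i V, h1, h2]

lemma alt_getLast {a b : α} (hab : a ≠ b) :
    ∀ (V : List α) (h : V ≠ []), V.Chain' (· ≠ ·) → (∀ c ∈ V, c = a ∨ c = b) →
      (V.getLast h = V.head h ↔ Odd V.length) := by
  intro V
  induction V with
  | nil => intro h; exact absurd rfl h
  | cons x V ih =>
    intro h hch hm
    cases V with
    | nil => simp
    | cons y t =>
      have hxy : x ≠ y := (List.isChain_cons_cons.mp hch).1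
      have hch' : (y :: t).Chain' (· ≠ ·) := (List.isChain_cons_cons.mp hch).2
      have hm' : ∀ c ∈ y :: t, c = a ∨ c = b := fun c hc => hm c (List.mem_cons_of_mem _ hc)
      have hne : (y :: t : List α) ≠ [] := List.cons_ne_nil _ _
      have hIH := ih hne hch' hm'
      have hmem := List.getLast_mem hne
      have hx := hm x List.mem_cons_self
      have hy := hm y (by simp)
      have hg := hm' _ hmem
      have hlast : (x :: y :: t).getLast h = (y :: t).getLast hne := List.getLast_cons hne
      have hhead : (x :: y :: t).head h = x := rfl
      rw [hlast, hhead]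
      have hg' : (y :: t).getLast hne = x ∨ (y :: t).getLast hne = y := by
        rcases hx with rfl | rfl <;> rcases hy with rfl | rfl <;> tauto
      have hiff : ((y :: t).getLast hne = x ↔ ¬((y :: t).getLast hne = y)) := by
        constructor
        · intro h1 h2
          exact hxy (h1.symm.trans h2)
        · intro h1
          rcases hg' with h' | h'
          · exact h'
          · exact absurd h' h1
      have hIH' : ((y :: t).getLast hne = y ↔ Odd (y :: t).length) := by
        simpa using hIH
      rw [hiff, hIH']
      simp only [List.length_cons, Nat.odd_iff]
      omega

lemma alt_palindrome_odd {a b : α} (hab : a ≠ b) (V : List α) (hch : V.Chain' (· ≠ ·))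
    (hm : ∀ c ∈ V, c = a ∨ c = b) (hpal : V.reverse = V) (hne : V ≠ []) : Odd V.length := by
  rw [← alt_getLast hab V hne hch hm]
  have hne' : V.reverse ≠ [] := by simpa using hne
  have h1 : V.reverse.head hne' = V.getLast hne := by
    simp [List.head_reverse]
  have h2 : V.reverse.head hne' = V.head hne := by
    congr 1 <;> rw [hpal]
  rw [← h1, h2]

lemma length_eq_count_add [DecidableEq α] {a b : α} (hab : a ≠ b) :
    ∀ (V : List α), (∀ c ∈ V, c = a ∨ c = b) → V.length = V.count a + V.count b := by
  intro V
  induction V with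
  | nil => simp
  | cons c V ih =>
    intro h
    have hV := ih (fun d hd => h d (List.mem_cons_of_mem _ hd))
    rcases h c List.mem_cons_self with rfl | rfl <;>
      simp [List.count_cons, hab, hab.symm, hV] <;> omega

lemma length_eq_sum_count {m : ℕ} (u : List (Fin m)) : u.length = ∑ j : Fin m, u.count j := by
  induction u with
  | nil => simp
  | cons c u ih =>
    simp only [List.count_cons, List.length_cons, Finset.sum_add_distrib, ← ih]
    simp

lemma count_le_of_gap [DecidableEq α] (j r : α) :
    ∀ (N : ℕ) (u : List α), u.length ≤ N →
      (∀ x y z, u = x ++ j :: y ++ j :: z → j ∉ y → r ∈ y) →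
      u.count j ≤ u.count r + 1 := by
  intro N
  induction N with
  | zero =>
    intro u hu _
    have : u = [] := List.eq_nil_of_length_eq_zero (Nat.le_zero.mp hu)
    simp [this]
  | succ N ih =>
    intro u hu H
    by_cases h2 : u.count j ≤ 1
    · omega
    · have hj : j ∈ u := by
        by_contra hj
        rw [List.count_eq_zero.mpr hj] at h2
        omega
      obtain ⟨x, t, rfl, hx⟩ := exists_first_split hj
      have hjt : j ∈ t := by
        by_contra hjt
        have e : (x ++ j :: t).count j = x.count j + (t.count j + 1) := by
          simp [List.count_append, List.count_cons]
        rw [List.count_eq_zero.mpr hx, List.count_eq_zero.mpr hjt] at e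
        omega
      obtain ⟨y, z, rfl, hy⟩ := exists_first_split hjt
      have hr : r ∈ y := H x y z (by simp) hy
      have hIH := ih (j :: z) (by simp at hu ⊢; omega) (by
        intro x' y' z' he hn
        refine H (x ++ j :: y ++ x') y' z' ?_ hn
        rw [he]
        simp)
      have e1 : (x ++ j :: (y ++ j :: z)).count j = (j :: z).count j + 1 := by
        simp [List.count_append, List.count_cons, List.count_eq_zero.mpr hx,
          List.count_eq_zero.mpr hy]
      have e2 : (j :: z).count r + 1 ≤ (x ++ j :: (y ++ j :: z)).count r := by
        have h1r : 1 ≤ y.count r := List.count_pos_iff.mpr hr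
        by_cases hrj : r = j <;> simp [List.count_append, List.count_cons, hrj] <;> omega
      omega

end ListFacts

def IsFullyCommutative' {B W : Type*} [Group W] {M : CoxeterMatrix B}
    (cs : CoxeterSystem M W) (w : W) : Prop :=
  ∀ u v : List B, cs.IsReduced u → cs.wordProd u = w →
    cs.IsReduced v → cs.wordProd v = w → CommEquiv M u v

section Gap
variable {n : ℕ} [NeZero n] {W : Type*} [Group W] {cs : CoxeterSystem (affineA n) W}

lemma caseA_false {s : Fin n} {x y z : List (Fin n)}
    (hcomm : ∀ c ∈ y, affineA n s c = 2)
    (hred : cs.IsReduced (x ++ s :: y ++ s :: z)) : False := by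
  have hc := simple_comm_wordProd cs s y hcomm
  have hinner : (cs.simple s * cs.wordProd y) * (cs.simple s * cs.wordProd z)
      = cs.wordProd y * cs.wordProd z := by
    rw [hc, mul_assoc, ← mul_assoc (cs.simple s), cs.simple_mul_simple_self, one_mul]
  have hw : cs.wordProd (x ++ s :: y ++ s :: z)
      = cs.wordProd x * (cs.wordProd y * cs.wordProd z) := by
    simp only [cs.wordProd_append, cs.wordProd_cons]
    rw [mul_assoc, hinner]
  have h1 := cs.length_wordProd_le (x ++ (y ++ z))
  have h2 : cs.length (cs.wordProd (x ++ s :: y ++ s :: z)) = (x ++ s :: y ++ s :: z).length :=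
    hred
  rw [hw] at h2
  rw [cs.wordProd_append, cs.wordProd_append] at h1
  rw [h2] at h1
  simp [List.length_append] at h1

lemma caseB_false (hn : 3 ≤ n) {w : W} (hfc : IsFullyCommutative' cs w)
    {x y z : List (Fin n)} {s t : Fin n}
    (hred : cs.IsReduced (x ++ s :: y ++ s :: z))
    (hprod : cs.wordProd (x ++ s :: y ++ s :: z) = w)
    (hs : s ∉ y) (ht : t ∈ y)
    (hadj : t = s + 1 ∨ s = t + 1)
    (hother : ∀ c ∈ y, c ≠ t → affineA n s c = 2)
    (HIH : ∀ (y' : List (Fin n)), y'.length < y.length → ∀ (x' z' : List (Fin n)) (s' : Fin n),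
        cs.IsReduced (x' ++ s' :: y' ++ s' :: z') →
        cs.wordProd (x' ++ s' :: y' ++ s' :: z') = w →
        s' ∉ y' → (s' + 1) ∈ y' ∧ (s' - 1) ∈ y') : False := by
  have hst3 : affineA n s t = 3 := M_adj hn s t hadj
  have hsnet : s ≠ t := by
    intro h
    rw [h, M_diag] at hst3
    omega
  by_cases hcnt : 2 ≤ y.count t
  · -- two occurrences of t between the two s's
    obtain ⟨p, r, rfl, hp⟩ := exists_first_split ht
    have htr : t ∈ r := by
      by_contra htr
      have e : (p ++ t :: r).count t = p.count t + (r.count t + 1) := by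
        simp [List.count_append, List.count_cons]
      rw [List.count_eq_zero.mpr hp, List.count_eq_zero.mpr htr] at e
      omega
    obtain ⟨m, q, rfl, hm⟩ := exists_first_split htr
    have hre : x ++ s :: (p ++ t :: (m ++ t :: q)) ++ s :: z
        = (x ++ s :: p) ++ t :: m ++ t :: (q ++ s :: z) := by simp
    rw [hre] at hred hprod
    have hlt : m.length < (p ++ t :: (m ++ t :: q)).length := by simp; omega
    obtain ⟨ha1, ha2⟩ := HIH m hlt _ _ t hred hprod hm
    have hsm : s ∈ m := by
      rcases hadj with h | h
      · have hst : s = t - 1 := by rw [h, add_sub_cancel_right]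
        rw [hst]; exact ha2
      · rw [← h] at ha1; exact ha1
    exact hs (by simp [hsm])
  · -- exactly one occurrence of t
    obtain ⟨p, q, rfl, hp⟩ := exists_first_split ht
    have hq : t ∉ q := by
      intro hq
      have e : (p ++ t :: q).count t = p.count t + (q.count t + 1) := by
        simp [List.count_append, List.count_cons]
      have h1q : 1 ≤ q.count t := List.count_pos_iff.mpr hq
      omega
    have hsp : s ∉ p := fun h => hs (by simp [h])
    have hsq : s ∉ q := fun h => hs (by simp [h])
    have hpc : ∀ c ∈ p, affineA n s c = 2 := fun c hc =>
      hother c (by simp [hc]) (fun h => hp (h ▸ hc))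
    have hqc : ∀ c ∈ q, affineA n s c = 2 := fun c hc =>
      hother c (by simp [hc]) (fun h => hq (h ▸ hc))
    have hre : x ++ s :: (p ++ t :: q) ++ s :: z = x ++ s :: (p ++ (t :: q ++ s :: z)) := by simp
    rw [hre] at hred hprod
    have e1 : CommEquiv (affineA n) (x ++ s :: (p ++ (t :: q ++ s :: z)))
        (x ++ (p ++ s :: (t :: q ++ s :: z))) := commEquiv_push s p hpc x _
    have e2 : CommEquiv (affineA n) ((x ++ p ++ [s, t]) ++ s :: (q ++ z))
        ((x ++ p ++ [s, t]) ++ (q ++ s :: z)) := commEquiv_push s q hqc _ _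
    have hmid : x ++ (p ++ s :: (t :: q ++ s :: z)) = (x ++ p ++ [s, t]) ++ (q ++ s :: z) := by
      simp
    have e3 : CommEquiv (affineA n) (x ++ s :: (p ++ (t :: q ++ s :: z)))
        ((x ++ p ++ [s, t]) ++ s :: (q ++ z)) := by
      refine Relation.EqvGen.trans _ _ _ e1 ?_
      rw [hmid]
      exact Relation.EqvGen.symm _ _ e2
    have hu'alt : (x ++ p ++ [s, t]) ++ s :: (q ++ z)
        = (x ++ p) ++ s :: t :: s :: (q ++ z) := by simp
    have hπ' : cs.wordProd ((x ++ p) ++ s :: t :: s :: (q ++ z)) = w := by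
      rw [← hu'alt, ← commEquiv_wordProd cs e3, hprod]
    have key : cs.simple t * cs.simple s * cs.simple t
        = cs.simple s * cs.simple t * cs.simple s := (braid cs hst3).symm
    have hπ'' : cs.wordProd ((x ++ p) ++ t :: s :: t :: (q ++ z)) = w := by
      have c1 : cs.wordProd ((x ++ p) ++ t :: s :: t :: (q ++ z))
          = cs.wordProd (x ++ p) * (cs.simple t * cs.simple s * cs.simple t)
            * cs.wordProd (q ++ z) := by
        simp [cs.wordProd_append, cs.wordProd_cons, mul_assoc]
      have c2 : cs.wordProd ((x ++ p) ++ s :: t :: s :: (q ++ z))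
          = cs.wordProd (x ++ p) * (cs.simple s * cs.simple t * cs.simple s)
            * cs.wordProd (q ++ z) := by
        simp [cs.wordProd_append, cs.wordProd_cons, mul_assoc]
      rw [c1, key, ← c2, hπ']
    have hlen'' : ((x ++ p) ++ t :: s :: t :: (q ++ z)).length
        = (x ++ s :: (p ++ (t :: q ++ s :: z))).length := by simp; omega
    have hred'' : cs.IsReduced ((x ++ p) ++ t :: s :: t :: (q ++ z)) := by
      have h1 : cs.length w = (x ++ s :: (p ++ (t :: q ++ s :: z))).length := by
        rw [← hprod]; exact hred
      show cs.length (cs.wordProd _) = _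
      rw [hπ'', h1, hlen'']
    have hcomm := hfc _ _ hred hprod hred'' hπ''
    have hcount := (CommEquiv.perm hcomm).count_eq s
    have h0p : p.count s = 0 := List.count_eq_zero.mpr hsp
    have h0q : q.count s = 0 := List.count_eq_zero.mpr hsq
    simp [List.count_append, List.count_cons, hsnet, hsnet.symm, h0p, h0q] at hcount

lemma gap_lemma (hn : 3 ≤ n) {w : W} (hfc : IsFullyCommutative' cs w) :
    ∀ (N : ℕ) (y : List (Fin n)), y.length ≤ N → ∀ (x z : List (Fin n)) (s : Fin n),
      cs.IsReduced (x ++ s :: y ++ s :: z) →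
      cs.wordProd (x ++ s :: y ++ s :: z) = w →
      s ∉ y → (s + 1) ∈ y ∧ (s - 1) ∈ y := by
  intro N
  induction N with
  | zero =>
    intro y hy x z s hred _ _
    have hnil : y = [] := List.eq_nil_of_length_eq_zero (Nat.le_zero.mp hy)
    subst hnil
    exact (caseA_false (fun c hc => absurd hc List.not_mem_nil) hred).elim
  | succ N ih =>
    intro y hy x z s hred hprod hs
    by_cases h1 : (s + 1) ∈ y <;> by_cases h2 : (s - 1) ∈ y
    · exact ⟨h1, h2⟩
    · exfalso
      refine caseB_false hn hfc hred hprod hs h1 (Or.inl rfl) ?_ ?_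
      · intro c hc hct
        rw [M_eq_two_iff hn]
        refine ⟨fun h => hs (by rwa [h] at hc), hct, fun h => h2 ?_⟩
        have hcs : c = s - 1 := eq_sub_iff_add_eq.mpr h.symm
        rwa [hcs] at hc
      · intro y' hy' x' z' s' a b c2
        exact ih y' (by omega) x' z' s' a b c2
    · exfalso
      refine caseB_false hn hfc hred hprod hs h2 (Or.inr (sub_add_cancel s 1).symm) ?_ ?_
      · intro c hc hct
        rw [M_eq_two_iff hn]
        refine ⟨fun h => hs (by rwa [h] at hc), fun h => h1 (by rwa [h] at hc), fun h => hct ?_⟩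
        exact eq_sub_iff_add_eq.mpr h.symm
      · intro y' hy' x' z' s' a b c2
        exact ih y' (by omega) x' z' s' a b c2
    · exfalso
      refine caseA_false ?_ hred
      intro c hc
      rw [M_eq_two_iff hn]
      refine ⟨fun h => hs (by rwa [h] at hc), fun h => h1 (by rwa [h] at hc), fun h => h2 ?_⟩
      have hcs : c = s - 1 := eq_sub_iff_add_eq.mpr h.symm
      rwa [hcs] at hc

end Gap

open Fin.NatCast

lemma exists_count_zero {n : ℕ} [NeZero n] (hodd : Odd n) (c : Fin n → ℕ)
    (H : ∀ i : Fin n, c i + c (i + 1) ≠ 0 → Odd (c i + c (i + 1))) :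
    ∃ i, c i = 0 := by
  by_contra h
  push_neg at h
  have key : ∀ k : ℕ, (c ((0 : Fin n) + (k : Fin n)) + k) % 2 = c 0 % 2 := by
    intro k
    induction k with
    | zero => simp
    | succ k ih =>
      have h1 : (0 : Fin n) + ((k + 1 : ℕ) : Fin n) = ((0 : Fin n) + (k : Fin n)) + 1 := by
        push_cast
        rw [add_assoc]
      have h2 := H ((0 : Fin n) + (k : Fin n)) (by
        have := h ((0 : Fin n) + (k : Fin n))
        omega)
      rw [h1]
      rw [Nat.odd_iff] at h2
      omega
  have hk := key n
  rw [Fin.natCast_self] at hk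
  simp only [add_zero] at hk
  rw [Nat.odd_iff] at hodd
  omega


/-- For odd `n ≥ 3`, the set of fully commutative involutions in the affine Coxeter
group of type `Ã_{n-1}` is finite. -/
theorem finite_fcInvolutions_affineA (n : ℕ) (hn : 3 ≤ n) (hodd : Odd n) :
    {w : (affineA n).Group | IsFCInvolution (affineA n).toCoxeterSystem w}.Finite := by
  haveI : NeZero n := ⟨by omega⟩
  have hfin : {l : List (Fin n) | l.length ≤ n * n}.Finite := List.finite_length_le _ _
  refine Set.Finite.subset (hfin.image (affineA n).toCoxeterSystem.wordProd) ?_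
  rintro w ⟨hfc0, hinv⟩
  set cs := (affineA n).toCoxeterSystem with hcsdef
  have hfc : IsFullyCommutative' cs w := hfc0
  obtain ⟨u, hured, hup⟩ := cs.exists_reduced_word' w
  refine ⟨u, ?_, hup.symm⟩
  simp only [Set.mem_setOf_eq]
  -- Gap property of u
  have G : ∀ (x y z : List (Fin n)) (s : Fin n), u = x ++ s :: y ++ s :: z → s ∉ y →
      (s + 1) ∈ y ∧ (s - 1) ∈ y := by
    intro x y z s he hs
    exact gap_lemma hn hfc y.length y le_rfl x z s (he ▸ hured) (he ▸ hup.symm) hs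
  -- the reverse of u is also a reduced word for w
  have hwinv : w⁻¹ = w := inv_eq_of_mul_eq_one_right hinv
  have hrev_red : cs.IsReduced u.reverse := (cs.isReduced_reverse_iff u).mpr hured
  have hrev_prod : cs.wordProd u.reverse = w := by
    rw [cs.wordProd_reverse, ← hup, hwinv]
  -- parity of pair counts
  have Hpar : ∀ a : Fin n, u.count a + u.count (a + 1) ≠ 0 →
      Odd (u.count a + u.count (a + 1)) := by
    intro a hne0
    set p : Fin n → Bool := fun c => decide (c = a ∨ c = a + 1) with hpdef
    have hpa : p a = true := by simp [hpdef]
    have hpa1 : p (a + 1) = true := by simp [hpdef]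
    have hmemV : ∀ c ∈ u.filter p, c = a ∨ c = a + 1 := by
      intro c hc
      have := (List.mem_filter.mp hc).2
      simpa [hpdef] using this
    have haa1 : a ≠ a + 1 := self_ne_add_one hn a
    -- counts in the filtered word
    have hca : (u.filter p).count a = u.count a := List.count_filter hpa
    have hca1 : (u.filter p).count (a + 1) = u.count (a + 1) := List.count_filter hpa1
    have hlenV : (u.filter p).length = u.count a + u.count (a + 1) := by
      rw [length_eq_count_add haa1 (u.filter p) hmemV, hca, hca1]
    -- palindrome
    have hp2 : ∀ b c : Fin n, affineA n b c = 2 → p b = true → p c = true → False := by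
      intro b c h2 hb hc
      simp only [hpdef, decide_eq_true_eq] at hb hc
      rw [M_eq_two_iff hn] at h2
      obtain ⟨hd1, hd2, hd3⟩ := h2
      rcases hb with rfl | rfl <;> rcases hc with h | h
      · exact hd1 h
      · exact hd2 h
      · exact hd3 (by rw [h])
      · exact hd1 (by rw [h])
    have hfilt : u.filter p = u.reverse.filter p :=
      commEquiv_filter p hp2 (hfc u u.reverse hured hup.symm hrev_red hrev_prod)
    have hpal : (u.filter p).reverse = u.filter p := by
      rw [← List.filter_reverse, ← hfilt]
    -- alternation
    have hchain : (u.filter p).Chain' (· ≠ ·) := by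
      show List.IsChain _ _; rw [List.isChain_iff_getElem]
      intro i hi
      intro heq
      have heq : (u.filter p).get ⟨i, by omega⟩ = (u.filter p).get ⟨i + 1, hi⟩ := heq
      have hilt : i + 1 < (u.filter p).length := by omega
      have hdec := take_get_get_drop (u.filter p) i hilt
      rw [heq] at hdec
      have hdV : (u.filter p).get ⟨i + 1, hilt⟩ ∈ u.filter p := List.get_mem _ _
      have hpd : p ((u.filter p).get ⟨i + 1, hilt⟩) = true := (List.mem_filter.mp hdV).2
      obtain ⟨x, y, z, hu2, hy⟩ := filter_split hdec
      have hdy : (u.filter p).get ⟨i + 1, hilt⟩ ∉ y := fun hmem => by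
        rw [hy _ hmem] at hpd
        exact Bool.false_ne_true hpd
      obtain ⟨hg1, hg2⟩ := G x y z _ hu2 hdy
      simp only [hpdef, decide_eq_true_eq] at hpd
      rcases hpd with hda | hda
      · rw [hda] at hg1
        have := hy _ hg1
        simp [hpdef] at this
      · have hsub : ((u.filter p).get ⟨i + 1, hilt⟩) - 1 = a := by
          rw [hda, add_sub_cancel_right]
        rw [hsub] at hg2
        have := hy _ hg2
        simp [hpdef] at this
    have hVne : u.filter p ≠ [] := by
      intro hnil
      rw [hnil] at hlenV
      simp at hlenV
      omega
    rw [← hlenV]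
    exact alt_palindrome_odd haa1 (u.filter p) hchain hmemV hpal hVne
  -- some generator is absent
  obtain ⟨i0, hi0⟩ := exists_count_zero hodd (fun i => u.count i) Hpar
  have hi0' : u.count i0 = 0 := hi0
  -- count bound along the cycle
  have hbound : ∀ k : ℕ, u.count (i0 + (k : Fin n)) ≤ k := by
    intro k
    induction k with
    | zero => simp [hi0']
    | succ k ih =>
      have hcast : ((k + 1 : ℕ) : Fin n) = (k : Fin n) + 1 := by push_cast; ring
      have hsub : (i0 + ((k : Fin n) + 1)) - 1 = i0 + (k : Fin n) := by
        rw [← add_assoc, add_sub_cancel_right]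
      have hgap : ∀ x y z, u = x ++ (i0 + ((k : Fin n) + 1)) :: y ++ (i0 + ((k : Fin n) + 1)) :: z
          → (i0 + ((k : Fin n) + 1)) ∉ y → (i0 + (k : Fin n)) ∈ y := by
        intro x y z he hm
        have := (G x y z _ he hm).2
        rwa [hsub] at this
      have hle := count_le_of_gap (i0 + ((k : Fin n) + 1)) (i0 + (k : Fin n)) u.length u
        le_rfl hgap
      rw [← add_assoc] at hle
      rw [hcast, ← add_assoc]
      omega
  have hall : ∀ j : Fin n, u.count j ≤ n := by
    intro j
    have hj : j = i0 + (((j - i0).val : ℕ) : Fin n) := by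
      rw [Fin.cast_val_eq_self]
      abel
    rw [hj]
    exact le_trans (hbound _) (by have := (j - i0).isLt; omega)
  calc u.length = ∑ j : Fin n, u.count j := length_eq_sum_count u
    _ ≤ ∑ _j : Fin n, n := Finset.sum_le_sum (fun j _ => hall j)
    _ = n * n := by simp [Finset.sum_const, Fintype.card_fin, mul_comm]
end
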